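/- arXiv:2403.19707 — 9 statements merged into one kernel-verified Lean document; each statement's English description precedes it below -/
import Mathlib

section
/- In the setting of the split equality fixed point algorithm with prior knowledge of operator norms — H₁, H₂, H₃ real Hilbert spaces, D₁ : H₁ → H₃, D₂ : H₂ → H₃ nonzero bounded linear, L ≥ 1, T₁, T₂ L-Lipschitz quasi-pseudocontractive with T₁ − I, T₂ − I demiclosed at zero, 0 < η < ζ < 1/(1+√(1+L²)), U = (1−η)I + ηT₁((1−ζ)I + ζT₁), V = (1−η)I + ηT₂((1−ζ)I + ζT₂), L₁ = ‖D₁‖², L₂ = ‖D₂‖², a < α_n < 1 with a > 0, 0 < τ_n < 2/(L₁+L₂), τ_n → 0, Σ τ_n = ∞, and the iteration v_n = (1−τ_n)x_n + τ_n U x_n + τ_n D₁*(D₂ y_n − D₁ x_n), x_{n+1} = (1−α_n)v_n + α_n U v_n, w_n = (1−τ_n)y_n + τ_n V y_n + τ_n D₂*(D₁ x_n − D₂ y_n), y_{n+1} = (1−α_n)w_n + α_n V w_n, with Γ := {(x,y) : T₁x = x, T₂y = y, D₁x = D₂y} nonempty — if in addition T₁ and T₂ are semi-compact, then (x_n, y_n)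 converges strongly (in norm) to some (x*, y*) ∈ Γ. -/
open scoped RealInnerProductSpace
open Filter

open scoped RealInnerProductSpace

lemma norm_convex_sq {E : Type*} [NormedAddCommGroup E] [InnerProductSpace ℝ E]
    (t : ℝ) (a b : E) :
    ‖(1-t)•a + t•b‖^2 = (1-t)*‖a‖^2 + t*‖b‖^2 - t*(1-t)*‖a-b‖^2 := by
  have h : ∀ z : E, ‖z‖^2 = ⟪z, z⟫ := fun z => (real_inner_self_eq_norm_sq z).symm
  simp only [h, inner_add_left, inner_add_right, inner_sub_left, inner_sub_right,
    real_inner_smul_left, real_inner_smul_right, real_inner_comm a b]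
  ring

lemma zeta_key (L ζ : ℝ) (hL : 1 ≤ L) (hζ0 : 0 < ζ)
    (hζ : ζ < 1 / (1 + Real.sqrt (1 + L ^ 2))) :
    ζ^2*L^2 < 1 - 2*ζ ∧ ζ < 1/2 := by
  set s := Real.sqrt (1 + L^2) with hs
  have hs2 : s^2 = 1 + L^2 := Real.sq_sqrt (by positivity)
  have hs0 : 0 ≤ s := Real.sqrt_nonneg _
  have hs1 : 1 ≤ s := by nlinarith
  have hden : (0:ℝ) < 1 + s := by linarith
  have hζs : ζ * (1 + s) < 1 := (lt_div_iff₀ hden).mp hζ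
  have hζhalf : ζ < 1/2 := by nlinarith
  have h1 : ζ * s < 1 - ζ := by nlinarith
  have hzs : 0 < ζ * s := mul_pos hζ0 (by linarith)
  have h2 : (ζ*s)^2 < (1-ζ)^2 := by nlinarith
  constructor
  · nlinarith
  · exact hζhalf

lemma U_lemma {E : Type*} [NormedAddCommGroup E] [InnerProductSpace ℝ E]
    (L η ζ : ℝ) (hL : 1 ≤ L) (hη : 0 < η) (hηζ : η < ζ)
    (hζ : ζ < 1 / (1 + Real.sqrt (1 + L ^ 2)))
    (T : E → E)
    (hlip : ∀ x y, ‖T x - T y‖ ≤ L * ‖x - y‖)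
    (hqpc : ∀ x p, T p = p → ‖T x - p‖^2 ≤ ‖x - p‖^2 + ‖x - T x‖^2)
    (U : E → E) (hU : ∀ x, U x = (1-η) • x + η • T ((1-ζ) • x + ζ • T x))
    (p : E) (hp : T p = p) (x : E) :
    η * ‖U x - p‖^2 + (ζ - η) * ‖x - U x‖^2
      + η^2 * ζ * (1 - 2*ζ - ζ^2 * L^2) * ‖x - T x‖^2 ≤ η * ‖x - p‖^2 := by
  have hζ0 : 0 < ζ := lt_trans hη hηζ
  set y : E := (1-ζ) • x + ζ • T x with hy
  have e1 : U x - p = (1-η)•(x-p) + η•(T y - p) := by rw [hU]; module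
  have hA1 : ‖U x - p‖^2 = (1-η)*‖x-p‖^2 + η*‖T y - p‖^2 - η*(1-η)*‖x - T y‖^2 := by
    rw [e1, norm_convex_sq, show (x-p)-(T y - p) = x - T y from by abel]
  have hA2 : ‖T y - p‖^2 ≤ ‖y - p‖^2 + ‖y - T y‖^2 := hqpc y p hp
  have e3 : y - p = (1-ζ)•(x-p) + ζ•(T x - p) := by rw [hy]; module
  have hA3 : ‖y - p‖^2 = (1-ζ)*‖x-p‖^2 + ζ*‖T x - p‖^2 - ζ*(1-ζ)*‖x - T x‖^2 := by
    rw [e3, norm_convex_sq, show (x-p)-(T x - p) = x - T x from by abel]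
  have hA4 : ‖T x - p‖^2 ≤ ‖x - p‖^2 + ‖x - T x‖^2 := hqpc x p hp
  have e5 : y - T y = (1-ζ)•(x - T y) + ζ•(T x - T y) := by rw [hy]; module
  have hA5 : ‖y - T y‖^2 = (1-ζ)*‖x - T y‖^2 + ζ*‖T x - T y‖^2 - ζ*(1-ζ)*‖x - T x‖^2 := by
    rw [e5, norm_convex_sq, show (x - T y)-(T x - T y) = x - T x from by abel]
  have e6 : x - y = ζ•(x - T x) := by rw [hy]; module
  have h6n : ‖x - y‖ = ζ * ‖x - T x‖ := by
    rw [e6, norm_smul, Real.norm_eq_abs, abs_of_pos hζ0]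
  have hA6 : ‖T x - T y‖^2 ≤ L^2 * ζ^2 * ‖x - T x‖^2 := by
    have := hlip x y
    rw [h6n] at this
    nlinarith [norm_nonneg (T x - T y), norm_nonneg (x - T x), mul_pos hζ0 hζ0]
  have e7 : x - U x = η•(x - T y) := by rw [hU]; module
  have hA7 : ‖x - U x‖^2 = η^2 * ‖x - T y‖^2 := by
    rw [e7, norm_smul, Real.norm_eq_abs, abs_of_pos hη]; ring
  have hYp : ‖y - p‖^2 ≤ ‖x-p‖^2 + ζ^2*‖x - T x‖^2 := by
    linarith [mul_le_mul_of_nonneg_left hA4 hζ0.le]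
  have hYT : ‖y - T y‖^2 ≤ (1-ζ)*‖x - T y‖^2 + ζ^3*L^2*‖x - T x‖^2 - ζ*(1-ζ)*‖x - T x‖^2 := by
    linarith [mul_le_mul_of_nonneg_left hA6 hζ0.le]
  have hη2 : (0:ℝ) ≤ η^2 := sq_nonneg η
  have k2 := mul_le_mul_of_nonneg_left hA2 hη2
  have k3 := mul_le_mul_of_nonneg_left hYp hη2
  have k4 := mul_le_mul_of_nonneg_left hYT hη2
  rw [hA1, hA7]
  linarith [k2, k3, k4]

set_option maxHeartbeats 2000000 in
/-- Theorem 3.1 (strong convergence part): with semi-compactness, strong convergence. -/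
theorem sefpp_strong_convergence_with_norms
    {H₁ H₂ H₃ : Type*}
    [NormedAddCommGroup H₁] [InnerProductSpace ℝ H₁] [CompleteSpace H₁]
    [NormedAddCommGroup H₂] [InnerProductSpace ℝ H₂] [CompleteSpace H₂]
    [NormedAddCommGroup H₃] [InnerProductSpace ℝ H₃] [CompleteSpace H₃]
    (D₁ : H₁ →L[ℝ] H₃) (D₂ : H₂ →L[ℝ] H₃)
    (hD₁ : D₁ ≠ 0) (hD₂ : D₂ ≠ 0)
    (L : ℝ) (hL : 1 ≤ L)
    (T₁ : H₁ → H₁) (T₂ : H₂ → H₂)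
    (hT₁lip : ∀ x y : H₁, ‖T₁ x - T₁ y‖ ≤ L * ‖x - y‖)
    (hT₂lip : ∀ x y : H₂, ‖T₂ x - T₂ y‖ ≤ L * ‖x - y‖)
    (hT₁qpc : ∀ (x p : H₁), T₁ p = p → ‖T₁ x - p‖ ^ 2 ≤ ‖x - p‖ ^ 2 + ‖x - T₁ x‖ ^ 2)
    (hT₂qpc : ∀ (y q : H₂), T₂ q = q → ‖T₂ y - q‖ ^ 2 ≤ ‖y - q‖ ^ 2 + ‖y - T₂ y‖ ^ 2)
    (hFix₁ : ∃ p, T₁ p = p) (hFix₂ : ∃ q, T₂ q = q)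
    (hT₁dem : ∀ (u : ℕ → H₁) (z : H₁),
      (∀ h : H₁, Filter.Tendsto (fun n => ⟪u n, h⟫) Filter.atTop (nhds ⟪z, h⟫)) →
      Filter.Tendsto (fun n => ‖u n - T₁ (u n)‖) Filter.atTop (nhds 0) → T₁ z = z)
    (hT₂dem : ∀ (u : ℕ → H₂) (z : H₂),
      (∀ h : H₂, Filter.Tendsto (fun n => ⟪u n, h⟫) Filter.atTop (nhds ⟪z, h⟫)) →
      Filter.Tendsto (fun n => ‖u n - T₂ (u n)‖) Filter.atTop (nhds 0) → T₂ z = z)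
    (η ζ : ℝ) (hη : 0 < η) (hηζ : η < ζ)
    (hζ : ζ < 1 / (1 + Real.sqrt (1 + L ^ 2)))
    (U : H₁ → H₁) (V : H₂ → H₂)
    (hU : ∀ x : H₁, U x = (1 - η) • x + η • T₁ ((1 - ζ) • x + ζ • T₁ x))
    (hV : ∀ y : H₂, V y = (1 - η) • y + η • T₂ ((1 - ζ) • y + ζ • T₂ y))
    (L₁ L₂ : ℝ) (hL₁ : L₁ = ‖D₁‖ ^ 2) (hL₂ : L₂ = ‖D₂‖ ^ 2)
    (a : ℝ) (ha : 0 < a) (α τ : ℕ → ℝ)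
    (hα : ∀ n, a < α n ∧ α n < 1)
    (hτ : ∀ n, 0 < τ n ∧ τ n < 2 / (L₁ + L₂))
    (hτ0 : Filter.Tendsto τ Filter.atTop (nhds 0))
    (hτsum : Filter.Tendsto (fun N => ∑ n ∈ Finset.range N, τ n) Filter.atTop Filter.atTop)
    (x : ℕ → H₁) (y : ℕ → H₂) (v : ℕ → H₁) (w : ℕ → H₂)
    (hv : ∀ n, v n = (1 - τ n) • x n + τ n • U (x n) +
      τ n • (ContinuousLinearMap.adjoint D₁) (D₂ (y n) - D₁ (x n)))
    (hx : ∀ n, x (n + 1) = (1 - α n) • v n + α n • U (v n))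
    (hw : ∀ n, w n = (1 - τ n) • y n + τ n • V (y n) +
      τ n • (ContinuousLinearMap.adjoint D₂) (D₁ (x n) - D₂ (y n)))
    (hy : ∀ n, y (n + 1) = (1 - α n) • w n + α n • V (w n))
    (hT₁sc : ∀ u : ℕ → H₁, (∃ M : ℝ, ∀ n, ‖u n‖ ≤ M) →
      Filter.Tendsto (fun n => ‖u n - T₁ (u n)‖) Filter.atTop (nhds 0) →
      ∃ (φ : ℕ → ℕ) (l : H₁), StrictMono φ ∧
        Filter.Tendsto (fun n => u (φ n)) Filter.atTop (nhds l))
    (hT₂sc : ∀ u : ℕ → H₂, (∃ M : ℝ, ∀ n, ‖u n‖ ≤ M) →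
      Filter.Tendsto (fun n => ‖u n - T₂ (u n)‖) Filter.atTop (nhds 0) →
      ∃ (φ : ℕ → ℕ) (l : H₂), StrictMono φ ∧
        Filter.Tendsto (fun n => u (φ n)) Filter.atTop (nhds l))
    (hΓ : ∃ (p : H₁) (q : H₂), T₁ p = p ∧ T₂ q = q ∧ D₁ p = D₂ q) :
    ∃ (xs : H₁) (ys : H₂), T₁ xs = xs ∧ T₂ ys = ys ∧ D₁ xs = D₂ ys ∧
      Filter.Tendsto x Filter.atTop (nhds xs) ∧
      Filter.Tendsto y Filter.atTop (nhds ys) := by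
  obtain ⟨p₀, q₀, hp₀, hq₀, hpq₀⟩ := hΓ
  have hζ0 : 0 < ζ := lt_trans hη hηζ
  obtain ⟨hkey1, hζhalf⟩ := zeta_key L ζ hL hζ0 hζ
  have hc₂pos : 0 < (ζ - η)/η := div_pos (by linarith) hη
  have hcSpos : 0 < η*ζ*(1 - 2*ζ - ζ^2*L^2) := by
    apply mul_pos (mul_pos hη hζ0); nlinarith
  set c₂ : ℝ := (ζ - η)/η with hc₂def
  set cS : ℝ := η*ζ*(1 - 2*ζ - ζ^2*L^2) with hcSdef
  -- quasi-nonexpansive-type estimates for U and V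
  have hUq : ∀ (p z : H₁), T₁ p = p →
      ‖U z - p‖^2 + c₂*‖z - U z‖^2 + cS*‖z - T₁ z‖^2 ≤ ‖z - p‖^2 := by
    intro p z hp
    have h := U_lemma L η ζ hL hη hηζ hζ T₁ hT₁lip hT₁qpc U hU p hp z
    have e : η * (‖U z - p‖^2 + c₂*‖z - U z‖^2 + cS*‖z - T₁ z‖^2)
        = η*‖U z - p‖^2 + (ζ-η)*‖z - U z‖^2
          + η^2*ζ*(1-2*ζ-ζ^2*L^2)*‖z - T₁ z‖^2 := by
      rw [hc₂def, hcSdef]; field_simp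
    have h2 : η * (‖U z - p‖^2 + c₂*‖z - U z‖^2 + cS*‖z - T₁ z‖^2)
        ≤ η * ‖z - p‖^2 := by rw [e]; linarith
    exact le_of_mul_le_mul_left h2 hη
  have hVq : ∀ (q z : H₂), T₂ q = q →
      ‖V z - q‖^2 + c₂*‖z - V z‖^2 + cS*‖z - T₂ z‖^2 ≤ ‖z - q‖^2 := by
    intro q z hq
    have h := U_lemma L η ζ hL hη hηζ hζ T₂ hT₂lip hT₂qpc V hV q hq z
    have e : η * (‖V z - q‖^2 + c₂*‖z - V z‖^2 + cS*‖z - T₂ z‖^2)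
        = η*‖V z - q‖^2 + (ζ-η)*‖z - V z‖^2
          + η^2*ζ*(1-2*ζ-ζ^2*L^2)*‖z - T₂ z‖^2 := by
      rw [hc₂def, hcSdef]; field_simp
    have h2 : η * (‖V z - q‖^2 + c₂*‖z - V z‖^2 + cS*‖z - T₂ z‖^2)
        ≤ η * ‖z - q‖^2 := by rw [e]; linarith
    exact le_of_mul_le_mul_left h2 hη
  have hD₁pos : 0 < ‖D₁‖ := by
    rcases (norm_nonneg D₁).lt_or_eq with h | h
    · exact h
    · exact absurd (by rwa [eq_comm, ContinuousLinearMap.opNorm_zero_iff] at h) hD₁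
  have hD₂pos : 0 < ‖D₂‖ := by
    rcases (norm_nonneg D₂).lt_or_eq with h | h
    · exact h
    · exact absurd (by rwa [eq_comm, ContinuousLinearMap.opNorm_zero_iff] at h) hD₂
  have hL₁pos : 0 < L₁ := by rw [hL₁]; exact pow_pos hD₁pos 2
  have hL₂pos : 0 < L₂ := by rw [hL₂]; exact pow_pos hD₂pos 2
  -- the decrease functional
  obtain ⟨δ, hδn⟩ : ∃ δ : ℕ → ℝ, ∀ n, δ n =
      cS*(‖x n - T₁ (x n)‖^2 + ‖y n - T₂ (y n)‖^2)
      + (1/2)*(‖x n - U (x n)‖^2 + ‖y n - V (y n)‖^2)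
      + ‖D₁ (x n) - D₂ (y n)‖^2 := ⟨_, fun n => rfl⟩
  have hδ0 : ∀ n, 0 ≤ δ n := by
    intro n; rw [hδn]
    have h1 : 0 ≤ cS*(‖x n - T₁ (x n)‖^2 + ‖y n - T₂ (y n)‖^2) :=
      mul_nonneg hcSpos.le (by positivity)
    have h2 : 0 ≤ (1/2)*(‖x n - U (x n)‖^2 + ‖y n - V (y n)‖^2) := by positivity
    have h3 : 0 ≤ ‖D₁ (x n) - D₂ (y n)‖^2 := by positivity
    linarith
  -- THE KEY one-step estimate
  have key : ∀ (p : H₁) (q : H₂), T₁ p = p → T₂ q = q → D₁ p = D₂ q →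
      ∀ n, τ n * (2+2*L₁+2*L₂) ≤ 1 →
      ‖x (n+1) - p‖^2 + ‖y (n+1) - q‖^2 + τ n * δ n
        ≤ ‖x n - p‖^2 + ‖y n - q‖^2 := by
    intro p q hp hq hpq n hsm
    obtain ⟨hτn, -⟩ := hτ n
    obtain ⟨hαa, hα1⟩ := hα n
    have hα0 : 0 < α n := lt_trans ha hαa
    -- v side
    have hu : v n - p = ((1 - τ n)•(x n - p) + τ n•(U (x n) - p))
        + τ n • (ContinuousLinearMap.adjoint D₁) (D₂ (y n) - D₁ (x n)) := by
      rw [hv n]; module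
    have hcvx1 : ‖(1 - τ n)•(x n - p) + τ n•(U (x n) - p)‖^2
        ≤ ‖x n - p‖^2 - τ n*(cS*‖x n - T₁ (x n)‖^2 + c₂*‖x n - U (x n)‖^2)
          - τ n*(1-τ n)*‖x n - U (x n)‖^2 := by
      rw [norm_convex_sq, show (x n - p) - (U (x n) - p) = x n - U (x n) from by abel]
      have h1 := mul_le_mul_of_nonneg_left (hUq p (x n) hp) hτn.le
      linarith
    have hinner1 : ⟪(1 - τ n)•(x n - p) + τ n•(U (x n) - p),
          τ n • (ContinuousLinearMap.adjoint D₁) (D₂ (y n) - D₁ (x n))⟫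
        ≤ τ n * ⟪D₁ (x n) - D₁ p, D₂ (y n) - D₁ (x n)⟫
          + (τ n)^2*(L₁*‖x n - U (x n)‖^2 + ‖D₁ (x n) - D₂ (y n)‖^2)/2 := by
      have hz : (1 - τ n)•(x n - p) + τ n•(U (x n) - p)
          = (x n - p) + τ n•(U (x n) - x n) := by module
      rw [hz, real_inner_smul_right, inner_add_left, real_inner_smul_left,
        ContinuousLinearMap.adjoint_inner_right, ContinuousLinearMap.adjoint_inner_right,
        map_sub, map_sub]
      have hb : ⟪D₁ (U (x n)) - D₁ (x n), D₂ (y n) - D₁ (x n)⟫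
          ≤ (L₁*‖x n - U (x n)‖^2 + ‖D₁ (x n) - D₂ (y n)‖^2)/2 := by
        have h1 := real_inner_le_norm (D₁ (U (x n)) - D₁ (x n)) (D₂ (y n) - D₁ (x n))
        have h2 : ‖D₁ (U (x n)) - D₁ (x n)‖ ≤ ‖D₁‖ * ‖x n - U (x n)‖ := by
          rw [← map_sub, norm_sub_rev (x n) (U (x n))]
          exact D₁.le_opNorm _
        have h3 : ‖D₂ (y n) - D₁ (x n)‖ = ‖D₁ (x n) - D₂ (y n)‖ := norm_sub_rev _ _
        have h4 := mul_le_mul_of_nonneg_right h2 (norm_nonneg (D₂ (y n) - D₁ (x n)))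
        rw [h3] at h1 h4
        rw [hL₁]
        nlinarith [sq_nonneg (‖D₁‖ * ‖x n - U (x n)‖ - ‖D₁ (x n) - D₂ (y n)‖), h1, h4]
      have h6 := mul_le_mul_of_nonneg_left hb (sq_nonneg (τ n))
      nlinarith [h6]
    have hAe1 : ‖τ n • (ContinuousLinearMap.adjoint D₁) (D₂ (y n) - D₁ (x n))‖^2
        ≤ (τ n)^2 * (L₁ * ‖D₁ (x n) - D₂ (y n)‖^2) := by
      rw [norm_smul, Real.norm_eq_abs, abs_of_pos hτn, mul_pow]
      have h1 : ‖(ContinuousLinearMap.adjoint D₁) (D₂ (y n) - D₁ (x n))‖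
          ≤ ‖D₁‖ * ‖D₂ (y n) - D₁ (x n)‖ := by
        have h := (ContinuousLinearMap.adjoint D₁).le_opNorm (D₂ (y n) - D₁ (x n))
        rwa [ContinuousLinearMap.adjoint.norm_map D₁] at h
      have h2 := pow_le_pow_left₀ (norm_nonneg _) h1 2
      have h3 := mul_le_mul_of_nonneg_left h2 (sq_nonneg (τ n))
      have h4 : ‖D₂ (y n) - D₁ (x n)‖ = ‖D₁ (x n) - D₂ (y n)‖ := norm_sub_rev _ _
      rw [h4] at h3
      rw [hL₁]
      nlinarith [h3]
    have hvp : ‖v n - p‖^2 ≤ ‖x n - p‖^2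
        - τ n*(cS*‖x n - T₁ (x n)‖^2 + c₂*‖x n - U (x n)‖^2)
        - τ n*(1-τ n)*‖x n - U (x n)‖^2
        + 2*(τ n * ⟪D₁ (x n) - D₁ p, D₂ (y n) - D₁ (x n)⟫)
        + (τ n)^2*(L₁*‖x n - U (x n)‖^2 + ‖D₁ (x n) - D₂ (y n)‖^2)
        + (τ n)^2*(L₁*‖D₁ (x n) - D₂ (y n)‖^2) := by
      rw [hu, norm_add_sq_real]
      linarith [hcvx1, hinner1, hAe1]
    -- w side
    have hu' : w n - q = ((1 - τ n)•(y n - q) + τ n•(V (y n) - q))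
        + τ n • (ContinuousLinearMap.adjoint D₂) (D₁ (x n) - D₂ (y n)) := by
      rw [hw n]; module
    have hcvx2 : ‖(1 - τ n)•(y n - q) + τ n•(V (y n) - q)‖^2
        ≤ ‖y n - q‖^2 - τ n*(cS*‖y n - T₂ (y n)‖^2 + c₂*‖y n - V (y n)‖^2)
          - τ n*(1-τ n)*‖y n - V (y n)‖^2 := by
      rw [norm_convex_sq, show (y n - q) - (V (y n) - q) = y n - V (y n) from by abel]
      have h1 := mul_le_mul_of_nonneg_left (hVq q (y n) hq) hτn.le
      linarith
    have hinner2 : ⟪(1 - τ n)•(y n - q) + τ n•(V (y n) - q),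
          τ n • (ContinuousLinearMap.adjoint D₂) (D₁ (x n) - D₂ (y n))⟫
        ≤ τ n * ⟪D₂ (y n) - D₂ q, D₁ (x n) - D₂ (y n)⟫
          + (τ n)^2*(L₂*‖y n - V (y n)‖^2 + ‖D₁ (x n) - D₂ (y n)‖^2)/2 := by
      have hz : (1 - τ n)•(y n - q) + τ n•(V (y n) - q)
          = (y n - q) + τ n•(V (y n) - y n) := by module
      rw [hz, real_inner_smul_right, inner_add_left, real_inner_smul_left,
        ContinuousLinearMap.adjoint_inner_right, ContinuousLinearMap.adjoint_inner_right,
        map_sub, map_sub]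
      have hb : ⟪D₂ (V (y n)) - D₂ (y n), D₁ (x n) - D₂ (y n)⟫
          ≤ (L₂*‖y n - V (y n)‖^2 + ‖D₁ (x n) - D₂ (y n)‖^2)/2 := by
        have h1 := real_inner_le_norm (D₂ (V (y n)) - D₂ (y n)) (D₁ (x n) - D₂ (y n))
        have h2 : ‖D₂ (V (y n)) - D₂ (y n)‖ ≤ ‖D₂‖ * ‖y n - V (y n)‖ := by
          rw [← map_sub, norm_sub_rev (y n) (V (y n))]
          exact D₂.le_opNorm _
        have h4 := mul_le_mul_of_nonneg_right h2 (norm_nonneg (D₁ (x n) - D₂ (y n)))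
        rw [hL₂]
        nlinarith [sq_nonneg (‖D₂‖ * ‖y n - V (y n)‖ - ‖D₁ (x n) - D₂ (y n)‖), h1, h4]
      have h6 := mul_le_mul_of_nonneg_left hb (sq_nonneg (τ n))
      nlinarith [h6]
    have hAe2 : ‖τ n • (ContinuousLinearMap.adjoint D₂) (D₁ (x n) - D₂ (y n))‖^2
        ≤ (τ n)^2 * (L₂ * ‖D₁ (x n) - D₂ (y n)‖^2) := by
      rw [norm_smul, Real.norm_eq_abs, abs_of_pos hτn, mul_pow]
      have h1 : ‖(ContinuousLinearMap.adjoint D₂) (D₁ (x n) - D₂ (y n))‖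
          ≤ ‖D₂‖ * ‖D₁ (x n) - D₂ (y n)‖ := by
        have h := (ContinuousLinearMap.adjoint D₂).le_opNorm (D₁ (x n) - D₂ (y n))
        rwa [ContinuousLinearMap.adjoint.norm_map D₂] at h
      have h2 := pow_le_pow_left₀ (norm_nonneg _) h1 2
      have h3 := mul_le_mul_of_nonneg_left h2 (sq_nonneg (τ n))
      rw [hL₂]
      nlinarith [h3]
    have hwq : ‖w n - q‖^2 ≤ ‖y n - q‖^2
        - τ n*(cS*‖y n - T₂ (y n)‖^2 + c₂*‖y n - V (y n)‖^2)
        - τ n*(1-τ n)*‖y n - V (y n)‖^2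
        + 2*(τ n * ⟪D₂ (y n) - D₂ q, D₁ (x n) - D₂ (y n)⟫)
        + (τ n)^2*(L₂*‖y n - V (y n)‖^2 + ‖D₁ (x n) - D₂ (y n)‖^2)
        + (τ n)^2*(L₂*‖D₁ (x n) - D₂ (y n)‖^2) := by
      rw [hu', norm_add_sq_real]
      linarith [hcvx2, hinner2, hAe2]
    -- cross term
    have hcross : ⟪D₁ (x n) - D₁ p, D₂ (y n) - D₁ (x n)⟫
        + ⟪D₂ (y n) - D₂ q, D₁ (x n) - D₂ (y n)⟫
        = -‖D₁ (x n) - D₂ (y n)‖^2 := by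
      have h1 : (D₁ (x n) - D₁ p) - (D₂ (y n) - D₂ q) = D₁ (x n) - D₂ (y n) := by
        rw [hpq]; abel
      have h2 : ⟪D₁ (x n) - D₁ p, D₂ (y n) - D₁ (x n)⟫
          = -⟪D₁ (x n) - D₁ p, D₁ (x n) - D₂ (y n)⟫ := by
        rw [show D₂ (y n) - D₁ (x n) = -(D₁ (x n) - D₂ (y n)) from by abel, inner_neg_right]
      rw [h2]
      have h3 : -⟪D₁ (x n) - D₁ p, D₁ (x n) - D₂ (y n)⟫
            + ⟪D₂ (y n) - D₂ q, D₁ (x n) - D₂ (y n)⟫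
          = -⟪(D₁ (x n) - D₁ p) - (D₂ (y n) - D₂ q), D₁ (x n) - D₂ (y n)⟫ := by
        simp only [inner_sub_left]; ring
      rw [h3, h1, real_inner_self_eq_norm_sq]
    -- combine v and w
    have hvw : ‖v n - p‖^2 + ‖w n - q‖^2 + τ n * δ n
        ≤ ‖x n - p‖^2 + ‖y n - q‖^2 := by
      rw [hδn n]
      have hcrossτ : 2*τ n * (⟪D₁ (x n) - D₁ p, D₂ (y n) - D₁ (x n)⟫
          + ⟪D₂ (y n) - D₂ q, D₁ (x n) - D₂ (y n)⟫)
          = 2*τ n * (-‖D₁ (x n) - D₂ (y n)‖^2) := by rw [hcross]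
      have hb1 := mul_le_mul_of_nonneg_left hsm
        (mul_nonneg hτn.le (pow_nonneg (norm_nonneg (x n - U (x n))) 2))
      have hb2 := mul_le_mul_of_nonneg_left hsm
        (mul_nonneg hτn.le (pow_nonneg (norm_nonneg (y n - V (y n))) 2))
      have hb3 := mul_le_mul_of_nonneg_left hsm
        (mul_nonneg hτn.le (pow_nonneg (norm_nonneg (D₁ (x n) - D₂ (y n))) 2))
      have hn1 : 0 ≤ (τ n)^2 * L₂ * ‖x n - U (x n)‖^2 :=
        mul_nonneg (mul_nonneg (sq_nonneg _) hL₂pos.le) (pow_nonneg (norm_nonneg _) 2)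
      have hn2 : 0 ≤ (τ n)^2 * L₁ * ‖y n - V (y n)‖^2 :=
        mul_nonneg (mul_nonneg (sq_nonneg _) hL₁pos.le) (pow_nonneg (norm_nonneg _) 2)
      have hn3 : 0 ≤ (τ n)^2 * (L₁+L₂) * ‖D₁ (x n) - D₂ (y n)‖^2 :=
        mul_nonneg (mul_nonneg (sq_nonneg _) (by linarith)) (pow_nonneg (norm_nonneg _) 2)
      have hn4 : 0 ≤ τ n * (c₂ * ‖x n - U (x n)‖^2) :=
        mul_nonneg hτn.le (mul_nonneg hc₂pos.le (pow_nonneg (norm_nonneg _) 2))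
      have hn5 : 0 ≤ τ n * (c₂ * ‖y n - V (y n)‖^2) :=
        mul_nonneg hτn.le (mul_nonneg hc₂pos.le (pow_nonneg (norm_nonneg _) 2))
      linarith [hvp, hwq, hcrossτ, hb1, hb2, hb3, hn1, hn2, hn3, hn4, hn5]
    -- pass to n+1
    have hx1 : ‖x (n+1) - p‖^2 ≤ ‖v n - p‖^2 := by
      have hid : x (n+1) - p = (1 - α n)•(v n - p) + α n•(U (v n) - p) := by
        rw [hx n]; module
      rw [hid, norm_convex_sq, show (v n - p) - (U (v n) - p) = v n - U (v n) from by abel]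
      have h1 := mul_le_mul_of_nonneg_left (hUq p (v n) hp) hα0.le
      have h2 : 0 ≤ α n * (1 - α n) * ‖v n - U (v n)‖^2 :=
        mul_nonneg (mul_nonneg hα0.le (by linarith)) (pow_nonneg (norm_nonneg _) 2)
      have h3 : 0 ≤ α n * (c₂ * ‖v n - U (v n)‖^2) :=
        mul_nonneg hα0.le (mul_nonneg hc₂pos.le (pow_nonneg (norm_nonneg _) 2))
      have h4 : 0 ≤ α n * (cS * ‖v n - T₁ (v n)‖^2) :=
        mul_nonneg hα0.le (mul_nonneg hcSpos.le (pow_nonneg (norm_nonneg _) 2))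
      linarith
    have hy1 : ‖y (n+1) - q‖^2 ≤ ‖w n - q‖^2 := by
      have hid : y (n+1) - q = (1 - α n)•(w n - q) + α n•(V (w n) - q) := by
        rw [hy n]; module
      rw [hid, norm_convex_sq, show (w n - q) - (V (w n) - q) = w n - V (w n) from by abel]
      have h1 := mul_le_mul_of_nonneg_left (hVq q (w n) hq) hα0.le
      have h2 : 0 ≤ α n * (1 - α n) * ‖w n - V (w n)‖^2 :=
        mul_nonneg (mul_nonneg hα0.le (by linarith)) (pow_nonneg (norm_nonneg _) 2)
      have h3 : 0 ≤ α n * (c₂ * ‖w n - V (w n)‖^2) :=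
        mul_nonneg hα0.le (mul_nonneg hc₂pos.le (pow_nonneg (norm_nonneg _) 2))
      have h4 : 0 ≤ α n * (cS * ‖w n - T₂ (w n)‖^2) :=
        mul_nonneg hα0.le (mul_nonneg hcSpos.le (pow_nonneg (norm_nonneg _) 2))
      linarith
    linarith [hvw, hx1, hy1]
  -- eventually τ is small
  obtain ⟨N₀, hN₀⟩ : ∃ N₀, ∀ n ≥ N₀, τ n * (2+2*L₁+2*L₂) ≤ 1 := by
    have hC : (0:ℝ) < 2+2*L₁+2*L₂ := by linarith
    have hpos : (0:ℝ) < 1/(2+2*L₁+2*L₂) := by positivity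
    have hev := hτ0.eventually (gt_mem_nhds hpos)
    rw [Filter.eventually_atTop] at hev
    obtain ⟨N₀, hN₀⟩ := hev
    refine ⟨N₀, fun n hn => ?_⟩
    have h := (hN₀ n hn).le
    calc τ n * (2+2*L₁+2*L₂) ≤ (1/(2+2*L₁+2*L₂)) * (2+2*L₁+2*L₂) :=
          mul_le_mul_of_nonneg_right h hC.le
      _ = 1 := by field_simp
  -- monotonicity of the Lyapunov functional from N₀ on
  have hmono : ∀ (p : H₁) (q : H₂), T₁ p = p → T₂ q = q → D₁ p = D₂ q →
      ∀ m n', N₀ ≤ m → m ≤ n' →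
      ‖x n' - p‖^2 + ‖y n' - q‖^2 ≤ ‖x m - p‖^2 + ‖y m - q‖^2 := by
    intro p q hp hq hpq m n' hm hmn
    induction n', hmn using Nat.le_induction with
    | base => exact le_rfl
    | succ n'' hmn ih =>
      have h1 := key p q hp hq hpq n'' (hN₀ n'' (le_trans hm hmn))
      have h2 : 0 ≤ τ n'' * δ n'' := mul_nonneg (hτ n'').1.le (hδ0 n'')
      linarith
  -- global boundedness
  obtain ⟨M, hM⟩ : ∃ M : ℝ, ∀ n, ‖x n‖ ≤ M ∧ ‖y n‖ ≤ M := by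
    have hΛ₀0 : (0:ℝ) ≤ ‖x N₀ - p₀‖^2 + ‖y N₀ - q₀‖^2 := by positivity
    set B : ℝ := Real.sqrt (‖x N₀ - p₀‖^2 + ‖y N₀ - q₀‖^2) + ‖p₀‖ + ‖q₀‖ with hB
    set M₀ : ℝ := (Finset.range (N₀+1)).sup' Finset.nonempty_range_add_one
      (fun k => ‖x k‖ + ‖y k‖) with hM₀
    refine ⟨max B M₀, fun n => ?_⟩
    rcases le_or_gt n N₀ with hn | hn
    · have hmem : n ∈ Finset.range (N₀+1) := Finset.mem_range.mpr (by omega)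
      have h1 : ‖x n‖ + ‖y n‖ ≤ M₀ := Finset.le_sup' (fun k => ‖x k‖ + ‖y k‖) hmem
      constructor
      · exact le_trans (by linarith [norm_nonneg (y n)]) (le_max_right B M₀)
      · exact le_trans (by linarith [norm_nonneg (x n)]) (le_max_right B M₀)
    · have h1 := hmono p₀ q₀ hp₀ hq₀ hpq₀ N₀ n le_rfl hn.le
      have hx2 : ‖x n - p₀‖ ≤ Real.sqrt (‖x N₀ - p₀‖^2 + ‖y N₀ - q₀‖^2) := by
        apply (Real.le_sqrt (norm_nonneg _) hΛ₀0).mpr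
        have := pow_nonneg (norm_nonneg (y n - q₀)) 2
        linarith
      have hy2 : ‖y n - q₀‖ ≤ Real.sqrt (‖x N₀ - p₀‖^2 + ‖y N₀ - q₀‖^2) := by
        apply (Real.le_sqrt (norm_nonneg _) hΛ₀0).mpr
        have := pow_nonneg (norm_nonneg (x n - p₀)) 2
        linarith
      constructor
      · have h2 := norm_sub_norm_le (x n) p₀
        have h3 := norm_nonneg q₀
        exact le_trans (by rw [hB]; linarith) (le_max_left B M₀)
      · have h2 := norm_sub_norm_le (y n) q₀
        have h3 := norm_nonneg p₀
        exact le_trans (by rw [hB]; linarith) (le_max_left B M₀)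
  -- telescoping estimate
  have htel : ∀ m, N₀ ≤ m → ∀ N,
      (‖x (m+N) - p₀‖^2 + ‖y (m+N) - q₀‖^2)
        + ∑ k ∈ Finset.range N, τ (m+k) * δ (m+k)
      ≤ ‖x m - p₀‖^2 + ‖y m - q₀‖^2 := by
    intro m hm N
    induction N with
    | zero => simp
    | succ N ih =>
      rw [Finset.sum_range_succ]
      have h1 := key p₀ q₀ hp₀ hq₀ hpq₀ (m+N) (hN₀ (m+N) (by omega))
      have e : m + (N+1) = (m+N)+1 := rfl
      rw [e]
      linarith
  -- frequently δ is small
  have hfreq : ∀ ε : ℝ, 0 < ε → ∃ᶠ n in Filter.atTop, δ n < ε := by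
    intro ε hε
    rw [Filter.frequently_atTop]
    intro N₁
    by_contra hcon
    push_neg at hcon
    set m := max N₀ N₁ with hm
    have hge : ∀ N, ε * ∑ k ∈ Finset.range N, τ (m+k)
        ≤ ‖x m - p₀‖^2 + ‖y m - q₀‖^2 := by
      intro N
      have h1 := htel m (le_max_left _ _) N
      have h2 : ε * ∑ k ∈ Finset.range N, τ (m+k)
          ≤ ∑ k ∈ Finset.range N, τ (m+k) * δ (m+k) := by
        rw [Finset.mul_sum]
        apply Finset.sum_le_sum
        intro k _
        have h3 := hcon (m+k) (le_trans (le_max_right N₀ N₁) (Nat.le_add_right m k))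
        have h4 := (hτ (m+k)).1
        calc ε * τ (m+k) = τ (m+k) * ε := mul_comm _ _
          _ ≤ τ (m+k) * δ (m+k) := mul_le_mul_of_nonneg_left h3 h4.le
      have h5 : (0:ℝ) ≤ ‖x (m+N) - p₀‖^2 + ‖y (m+N) - q₀‖^2 := by positivity
      linarith
    have hshift : Filter.Tendsto (fun N => ∑ k ∈ Finset.range N, τ (m+k))
        Filter.atTop Filter.atTop := by
      have h4 : Filter.Tendsto (fun N => ∑ n ∈ Finset.range (m+N), τ n)
          Filter.atTop Filter.atTop :=
        hτsum.comp (tendsto_atTop_mono (fun n => Nat.le_add_left n m) tendsto_id)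
      have h6 := Filter.tendsto_atTop_add_const_right Filter.atTop
        (-(∑ n ∈ Finset.range m, τ n)) h4
      refine h6.congr fun N => ?_
      rw [Finset.sum_range_add]; ring
    obtain ⟨N, hN⟩ := (hshift.eventually (Filter.eventually_gt_atTop
        ((‖x m - p₀‖^2 + ‖y m - q₀‖^2)/ε + 1))).exists
    have h7 := hge N
    have h8 : ε * ((‖x m - p₀‖^2 + ‖y m - q₀‖^2)/ε + 1)
        < ε * ∑ k ∈ Finset.range N, τ (m+k) := mul_lt_mul_of_pos_left hN hε
    have h9 : ε * ((‖x m - p₀‖^2 + ‖y m - q₀‖^2)/ε + 1)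
        = (‖x m - p₀‖^2 + ‖y m - q₀‖^2) + ε := by field_simp
    linarith
  -- extract a subsequence along which δ → 0
  obtain ⟨φ, hφmono, hφ⟩ := Filter.extraction_forall_of_frequently
    (fun n : ℕ => hfreq (1/((n:ℝ)+1)) (by positivity))
  have hδφ : Filter.Tendsto (fun n => δ (φ n)) Filter.atTop (nhds 0) :=
    squeeze_zero (fun n => hδ0 _) (fun n => (hφ n).le)
      tendsto_one_div_add_atTop_nhds_zero_nat
  -- components of δ tend to zero along φ
  have hcomp : ∀ (g : ℕ → ℝ) (c : ℝ), 0 < c → (∀ k, 0 ≤ g k) → (∀ k, c * g k ≤ δ k) →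
      Filter.Tendsto (fun k => g (φ k)) Filter.atTop (nhds 0) := by
    intro g c hc hg hgδ
    have h := hδφ.const_mul (1/c)
    rw [mul_zero] at h
    refine squeeze_zero (fun k => hg _) (fun k => ?_) h
    have h2 := hgδ (φ k)
    rw [show g (φ k) = (1/c)*(c*g (φ k)) from by field_simp]
    exact mul_le_mul_of_nonneg_left h2 (by positivity)
  have hsq0 : ∀ (g : ℕ → ℝ), (∀ k, 0 ≤ g k) →
      Filter.Tendsto (fun k => g k^2) Filter.atTop (nhds 0) →
      Filter.Tendsto g Filter.atTop (nhds 0) := by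
    intro g hg h
    have h2 := (Real.continuous_sqrt.tendsto 0).comp h
    rw [Real.sqrt_zero] at h2
    exact h2.congr fun k => Real.sqrt_sq (hg k)
  have hδlb1 : ∀ k, cS * ‖x k - T₁ (x k)‖^2 ≤ δ k := by
    intro k; rw [hδn k]
    have h1 : 0 ≤ cS * ‖y k - T₂ (y k)‖^2 :=
      mul_nonneg hcSpos.le (pow_nonneg (norm_nonneg _) 2)
    have h2 : 0 ≤ (1/2)*(‖x k - U (x k)‖^2 + ‖y k - V (y k)‖^2) := by positivity
    have h3 : 0 ≤ ‖D₁ (x k) - D₂ (y k)‖^2 := by positivity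
    linarith
  have hδlb2 : ∀ k, cS * ‖y k - T₂ (y k)‖^2 ≤ δ k := by
    intro k; rw [hδn k]
    have h1 : 0 ≤ cS * ‖x k - T₁ (x k)‖^2 :=
      mul_nonneg hcSpos.le (pow_nonneg (norm_nonneg _) 2)
    have h2 : 0 ≤ (1/2)*(‖x k - U (x k)‖^2 + ‖y k - V (y k)‖^2) := by positivity
    have h3 : 0 ≤ ‖D₁ (x k) - D₂ (y k)‖^2 := by positivity
    linarith
  have hδlb3 : ∀ k, 1 * ‖D₁ (x k) - D₂ (y k)‖^2 ≤ δ k := by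
    intro k; rw [hδn k]
    have h1 : 0 ≤ cS * (‖x k - T₁ (x k)‖^2 + ‖y k - T₂ (y k)‖^2) :=
      mul_nonneg hcSpos.le (by positivity)
    have h2 : 0 ≤ (1/2)*(‖x k - U (x k)‖^2 + ‖y k - V (y k)‖^2) := by positivity
    linarith
  have hS1n : Filter.Tendsto (fun k => ‖x (φ k) - T₁ (x (φ k))‖)
      Filter.atTop (nhds 0) :=
    hsq0 _ (fun k => norm_nonneg _)
      (hcomp (fun k => ‖x k - T₁ (x k)‖^2) cS hcSpos (fun k => by positivity) hδlb1)
  have hS2n : Filter.Tendsto (fun k => ‖y (φ k) - T₂ (y (φ k))‖)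
      Filter.atTop (nhds 0) :=
    hsq0 _ (fun k => norm_nonneg _)
      (hcomp (fun k => ‖y k - T₂ (y k)‖^2) cS hcSpos (fun k => by positivity) hδlb2)
  have hEn : Filter.Tendsto (fun k => ‖D₁ (x (φ k)) - D₂ (y (φ k))‖)
      Filter.atTop (nhds 0) :=
    hsq0 _ (fun k => norm_nonneg _)
      (hcomp (fun k => ‖D₁ (x k) - D₂ (y k)‖^2) 1 one_pos (fun k => by positivity) hδlb3)
  -- semicompactness: extract strongly convergent subsequences
  obtain ⟨ψ₁, xs, hψ₁, hxs⟩ := hT₁sc (fun k => x (φ k)) ⟨M, fun k => (hM _).1⟩ hS1n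
  obtain ⟨ψ₂, ys, hψ₂, hys⟩ := hT₂sc (fun k => y (φ (ψ₁ k)))
    ⟨M, fun k => (hM _).2⟩ (hS2n.comp hψ₁.tendsto_atTop)
  have hσmono : StrictMono (fun k => φ (ψ₁ (ψ₂ k))) := hφmono.comp (hψ₁.comp hψ₂)
  have hxσ : Filter.Tendsto (fun k => x (φ (ψ₁ (ψ₂ k)))) Filter.atTop (nhds xs) :=
    hxs.comp hψ₂.tendsto_atTop
  have hyσ : Filter.Tendsto (fun k => y (φ (ψ₁ (ψ₂ k)))) Filter.atTop (nhds ys) := hys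
  have hψσ : Filter.Tendsto (fun k => ψ₁ (ψ₂ k)) Filter.atTop Filter.atTop :=
    (hψ₁.comp hψ₂).tendsto_atTop
  have hS1σ : Filter.Tendsto (fun k => ‖x (φ (ψ₁ (ψ₂ k))) - T₁ (x (φ (ψ₁ (ψ₂ k))))‖)
      Filter.atTop (nhds 0) := hS1n.comp hψσ
  have hS2σ : Filter.Tendsto (fun k => ‖y (φ (ψ₁ (ψ₂ k))) - T₂ (y (φ (ψ₁ (ψ₂ k))))‖)
      Filter.atTop (nhds 0) := hS2n.comp hψσ
  have hEσ : Filter.Tendsto (fun k => ‖D₁ (x (φ (ψ₁ (ψ₂ k)))) - D₂ (y (φ (ψ₁ (ψ₂ k))))‖)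
      Filter.atTop (nhds 0) := hEn.comp hψσ
  -- the limit is a solution
  have hfix1 : T₁ xs = xs := by
    have hT₁cont : Filter.Tendsto (fun k => T₁ (x (φ (ψ₁ (ψ₂ k)))))
        Filter.atTop (nhds (T₁ xs)) := by
      rw [tendsto_iff_norm_sub_tendsto_zero]
      have h1 := tendsto_iff_norm_sub_tendsto_zero.mp hxσ
      have h2 := h1.const_mul L
      rw [mul_zero] at h2
      exact squeeze_zero (fun k => norm_nonneg _) (fun k => hT₁lip _ xs) h2
    have hd1 := (hxσ.sub hT₁cont).norm
    have heq1 : ‖xs - T₁ xs‖ = 0 := tendsto_nhds_unique hd1 hS1σ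
    have h := norm_eq_zero.mp heq1
    rw [sub_eq_zero] at h
    exact h.symm
  have hfix2 : T₂ ys = ys := by
    have hT₂cont : Filter.Tendsto (fun k => T₂ (y (φ (ψ₁ (ψ₂ k)))))
        Filter.atTop (nhds (T₂ ys)) := by
      rw [tendsto_iff_norm_sub_tendsto_zero]
      have h1 := tendsto_iff_norm_sub_tendsto_zero.mp hyσ
      have h2 := h1.const_mul L
      rw [mul_zero] at h2
      exact squeeze_zero (fun k => norm_nonneg _) (fun k => hT₂lip _ ys) h2
    have hd1 := (hyσ.sub hT₂cont).norm
    have heq1 : ‖ys - T₂ ys‖ = 0 := tendsto_nhds_unique hd1 hS2σ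
    have h := norm_eq_zero.mp heq1
    rw [sub_eq_zero] at h
    exact h.symm
  have hfixD : D₁ xs = D₂ ys := by
    have hDx : Filter.Tendsto (fun k => D₁ (x (φ (ψ₁ (ψ₂ k)))))
        Filter.atTop (nhds (D₁ xs)) := (D₁.continuous.tendsto xs).comp hxσ
    have hDy : Filter.Tendsto (fun k => D₂ (y (φ (ψ₁ (ψ₂ k)))))
        Filter.atTop (nhds (D₂ ys)) := (D₂.continuous.tendsto ys).comp hyσ
    have hdd := (hDx.sub hDy).norm
    have heqD : ‖D₁ xs - D₂ ys‖ = 0 := tendsto_nhds_unique hdd hEσ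
    rwa [norm_eq_zero, sub_eq_zero] at heqD
  -- Lyapunov functional w.r.t. the limit point tends to zero along σ
  have hΛσ : Filter.Tendsto
      (fun k => ‖x (φ (ψ₁ (ψ₂ k))) - xs‖^2 + ‖y (φ (ψ₁ (ψ₂ k))) - ys‖^2)
      Filter.atTop (nhds 0) := by
    have h1 := tendsto_iff_norm_sub_tendsto_zero.mp hxσ
    have h2 := tendsto_iff_norm_sub_tendsto_zero.mp hyσ
    have h1' : Filter.Tendsto (fun k => ‖x (φ (ψ₁ (ψ₂ k))) - xs‖^2)
        Filter.atTop (nhds 0) := by simpa using h1.pow 2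
    have h2' : Filter.Tendsto (fun k => ‖y (φ (ψ₁ (ψ₂ k))) - ys‖^2)
        Filter.atTop (nhds 0) := by simpa using h2.pow 2
    simpa using h1'.add h2'
  -- and hence along the whole sequence, by eventual monotonicity
  have hΛ0 : Filter.Tendsto (fun n => ‖x n - xs‖^2 + ‖y n - ys‖^2)
      Filter.atTop (nhds 0) := by
    rw [Metric.tendsto_atTop] at hΛσ ⊢
    intro ε hε
    obtain ⟨K, hK⟩ := hΛσ ε hε
    refine ⟨φ (ψ₁ (ψ₂ (max K N₀))), fun n hn => ?_⟩
    have h1 := hK (max K N₀) (le_max_left _ _)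
    have h2 := hmono xs ys hfix1 hfix2 hfixD (φ (ψ₁ (ψ₂ (max K N₀)))) n
      (le_trans (le_max_right K N₀) hσmono.le_apply) hn
    rw [Real.dist_eq, sub_zero] at h1 ⊢
    rw [abs_of_nonneg (by positivity)] at h1 ⊢
    linarith
  have hxlim : Filter.Tendsto x Filter.atTop (nhds xs) := by
    rw [tendsto_iff_norm_sub_tendsto_zero]
    apply hsq0 _ (fun n => norm_nonneg _)
    refine squeeze_zero (fun n => by positivity) (fun n => ?_) hΛ0
    have := pow_nonneg (norm_nonneg (y n - ys)) 2
    linarith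
  have hylim : Filter.Tendsto y Filter.atTop (nhds ys) := by
    rw [tendsto_iff_norm_sub_tendsto_zero]
    apply hsq0 _ (fun n => norm_nonneg _)
    refine squeeze_zero (fun n => by positivity) (fun n => ?_) hΛ0
    have := pow_nonneg (norm_nonneg (x n - xs)) 2
    linarith
  exact ⟨xs, ys, hfix1, hfix2, hfixD, hxlim, hylim⟩
end

section
/- In the operator-norm-free split equality fixed point algorithm — H₁, H₂, H₃ real Hilbert spaces, D₁ : H₁ → H₃, D₂ : H₂ → H₃ nonzero bounded linear, L ≥ 1, T₁, T₂ L-Lipschitz quasi-pseudocontractive with T₁ − I, T₂ − I demiclosed at zero, 0 < η < ζ < 1/(1+√(1+L²)), U = (1−η)I + ηT₁((1−ζ)I + ζT₁), V = (1−η)I + ηT₂((1−ζ)I + ζT₂), a < α_n < 1 with a > 0, (τ_n) ⊂ (0,1) with Σ τ_n = ∞ and Σ τ_n² < ∞, iteration v_n = (1−τ_n)x_n + τ_n U x_n + τ_n D₁*(D₂ y_n − D₁ x_n), x_{n+1} = (1−α_n)v_n + α_n U v_n, w_n = (1−τ_n)y_n + τ_n V y_n + τ_n D₂*(D₁ x_n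 − D₂ y_n), y_{n+1} = (1−α_n)w_n + α_n V w_n, and Γ := {(x,y) : T₁x = x, T₂y = y, D₁x = D₂y} nonempty — if in addition T₁ and T₂ are semi-compact, then (x_n, y_n) converges strongly (in norm) to some (x*, y*) ∈ Γ. -/
open scoped RealInnerProductSpace

open scoped RealInnerProductSpace

lemma normsq_add' {H : Type*} [NormedAddCommGroup H] [InnerProductSpace ℝ H] (a b : H) :
    ‖a + b‖ ^ 2 = ‖a‖ ^ 2 + 2 * ⟪a, b⟫ + ‖b‖ ^ 2 := by
  simp only [← real_inner_self_eq_norm_sq, inner_add_add_self]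
  rw [real_inner_comm b a]; ring

lemma comb_id' {H : Type*} [NormedAddCommGroup H] [InnerProductSpace ℝ H] (a b : H) (t : ℝ) :
    ‖(1 - t) • a + t • b‖ ^ 2
      = (1 - t) * ‖a‖ ^ 2 + t * ‖b‖ ^ 2 - t * (1 - t) * ‖a - b‖ ^ 2 := by
  simp only [← real_inner_self_eq_norm_sq, inner_add_add_self, inner_sub_sub_self,
    real_inner_smul_left, real_inner_smul_right]
  rw [real_inner_comm b a]; ring

lemma param_facts' (L η ζ : ℝ) (hL : 1 ≤ L) (hη : 0 < η) (hηζ : η < ζ)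
    (hζ : ζ < 1 / (1 + Real.sqrt (1 + L ^ 2))) :
    0 < ζ ∧ L * ζ < 1 ∧ L ^ 2 * ζ ^ 2 ≤ 1 - 2 * ζ ∧ ζ < 1 := by
  set s := Real.sqrt (1 + L ^ 2) with hs
  have hs0 : 0 ≤ s := Real.sqrt_nonneg _
  have hs2 : s ^ 2 = 1 + L ^ 2 := Real.sq_sqrt (by positivity)
  have hsL : L ≤ s := by nlinarith
  have h1s : (0:ℝ) < 1 + s := by linarith
  have h1 : ζ * (1 + s) < 1 := by
    rw [lt_div_iff₀ h1s] at hζ; exact hζ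
  have hζ0 : 0 < ζ := lt_trans hη hηζ
  have hζ1 : ζ < 1 := by nlinarith
  refine ⟨hζ0, by nlinarith, ?_, hζ1⟩
  have h2 : s * ζ < 1 - ζ := by nlinarith
  nlinarith [mul_le_mul h2.le h2.le (mul_nonneg hs0 hζ0.le) (by linarith : (0:ℝ) ≤ 1 - ζ)]

set_option maxHeartbeats 1000000 in
lemma lemA' {H : Type*} [NormedAddCommGroup H] [InnerProductSpace ℝ H]
    (T : H → H) (L η ζ : ℝ) (hL : 1 ≤ L)
    (hlip : ∀ x y : H, ‖T x - T y‖ ≤ L * ‖x - y‖)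
    (p : H) (hqpc : ∀ x : H, ‖T x - p‖ ^ 2 ≤ ‖x - p‖ ^ 2 + ‖x - T x‖ ^ 2)
    (hη : 0 < η) (hηζ : η < ζ) (hζ : ζ < 1 / (1 + Real.sqrt (1 + L ^ 2))) (x : H) :
    ‖((1 - η) • x + η • T ((1 - ζ) • x + ζ • T x)) - p‖ ^ 2
      + ((ζ - η) / η) * ‖((1 - η) • x + η • T ((1 - ζ) • x + ζ • T x)) - x‖ ^ 2
      ≤ ‖x - p‖ ^ 2 := by
  obtain ⟨hζ0, hLζ, hLζ2, hζ1⟩ := param_facts' L η ζ hL hη hηζ hζ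
  set z : H := (1 - ζ) • x + ζ • T x with hzdef
  set m : H := T z with hmdef
  have e1 : (1 - ζ) • (x - p) + ζ • (T x - p) = z - p := by rw [hzdef]; module
  have e2 : (1 - ζ) • (x - m) + ζ • (T x - m) = z - m := by rw [hzdef]; module
  have e3 : (1 - η) • (x - p) + η • (m - p) = ((1 - η) • x + η • m) - p := by module
  have e4 : ((1 - η) • x + η • m) - x = η • (m - x) := by module
  have hq1 : ‖T x - p‖ ^ 2 ≤ ‖x - p‖ ^ 2 + ‖x - T x‖ ^ 2 := hqpc x
  have hq2 : ‖m - p‖ ^ 2 ≤ ‖z - p‖ ^ 2 + ‖z - m‖ ^ 2 := hqpc z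
  have hx_z : ‖x - z‖ = ζ * ‖x - T x‖ := by
    rw [show x - z = ζ • (x - T x) by rw [hzdef]; module, norm_smul]
    simp [abs_of_pos hζ0]
  have hTxm : ‖T x - m‖ ≤ L * (ζ * ‖x - T x‖) := by
    rw [← hx_z, hmdef]; exact hlip x z
  have hTxm2 : ‖T x - m‖ ^ 2 ≤ L ^ 2 * ζ ^ 2 * ‖x - T x‖ ^ 2 := by
    nlinarith [norm_nonneg (T x - m), norm_nonneg (x - T x),
      mul_nonneg (mul_nonneg (by linarith : (0:ℝ) ≤ L) hζ0.le) (norm_nonneg (x - T x))]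
  have c1 : ‖z - p‖ ^ 2
      = (1 - ζ) * ‖x - p‖ ^ 2 + ζ * ‖T x - p‖ ^ 2 - ζ * (1 - ζ) * ‖x - T x‖ ^ 2 := by
    have h := comb_id' (x - p) (T x - p) ζ
    rw [e1, sub_sub_sub_cancel_right] at h; exact h
  have c2 : ‖z - m‖ ^ 2
      = (1 - ζ) * ‖x - m‖ ^ 2 + ζ * ‖T x - m‖ ^ 2 - ζ * (1 - ζ) * ‖x - T x‖ ^ 2 := by
    have h := comb_id' (x - m) (T x - m) ζ
    rw [e2, sub_sub_sub_cancel_right] at h; exact h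
  have c3 : ‖((1 - η) • x + η • m) - p‖ ^ 2
      = (1 - η) * ‖x - p‖ ^ 2 + η * ‖m - p‖ ^ 2 - η * (1 - η) * ‖x - m‖ ^ 2 := by
    have h := comb_id' (x - p) (m - p) η
    rw [e3, sub_sub_sub_cancel_right] at h; exact h
  have c4 : ‖((1 - η) • x + η • m) - x‖ ^ 2 = η ^ 2 * ‖x - m‖ ^ 2 := by
    rw [e4, norm_smul, Real.norm_eq_abs, abs_of_pos hη, mul_pow, norm_sub_rev]
  rw [c4]
  have hdiv : (ζ - η) / η * (η ^ 2 * ‖x - m‖ ^ 2) = (ζ - η) * η * ‖x - m‖ ^ 2 := by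
    field_simp
  rw [hdiv]
  nlinarith [mul_le_mul_of_nonneg_left hq1 (mul_pos hη hζ0).le,
    mul_le_mul_of_nonneg_left hq2 hη.le,
    mul_le_mul_of_nonneg_left hTxm2 (mul_pos hη hζ0).le,
    mul_nonneg (mul_nonneg (mul_pos hη hζ0).le (by nlinarith : (0:ℝ) ≤ 1 - 2*ζ - L^2*ζ^2))
      (sq_nonneg ‖x - T x‖)]

set_option maxHeartbeats 1000000 in
lemma lemB' {H : Type*} [NormedAddCommGroup H] [InnerProductSpace ℝ H]
    (T : H → H) (L η ζ : ℝ) (hL : 1 ≤ L)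
    (hlip : ∀ x y : H, ‖T x - T y‖ ≤ L * ‖x - y‖)
    (hη : 0 < η) (hηζ : η < ζ) (hζ : ζ < 1 / (1 + Real.sqrt (1 + L ^ 2))) (x : H) :
    η * (1 - L * ζ) * ‖x - T x‖
      ≤ ‖((1 - η) • x + η • T ((1 - ζ) • x + ζ • T x)) - x‖ := by
  obtain ⟨hζ0, hLζ, hLζ2, hζ1⟩ := param_facts' L η ζ hL hη hηζ hζ
  set z : H := (1 - ζ) • x + ζ • T x with hzdef
  set m : H := T z with hmdef
  have e4 : ((1 - η) • x + η • m) - x = η • (m - x) := by module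
  have hnu : ‖((1 - η) • x + η • m) - x‖ = η * ‖x - m‖ := by
    rw [e4, norm_smul, Real.norm_eq_abs, abs_of_pos hη, norm_sub_rev]
  have hx_z : ‖x - z‖ = ζ * ‖x - T x‖ := by
    rw [show x - z = ζ • (x - T x) by rw [hzdef]; module, norm_smul]
    simp [abs_of_pos hζ0]
  have hTxm : ‖T x - m‖ ≤ L * (ζ * ‖x - T x‖) := by
    rw [← hx_z, hmdef]; exact hlip x z
  have htri : ‖x - T x‖ ≤ ‖x - m‖ + ‖T x - m‖ := by
    rw [norm_sub_rev (T x) m]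
    simpa using norm_sub_le_norm_sub_add_norm_sub x m (T x)
  rw [hnu]
  nlinarith [norm_nonneg (x - T x)]

set_option maxHeartbeats 1000000 in
lemma step_ineq' {H K : Type*} [NormedAddCommGroup H] [InnerProductSpace ℝ H] [CompleteSpace H]
    [NormedAddCommGroup K] [InnerProductSpace ℝ K] [CompleteSpace K]
    (D : H →L[ℝ] K) (p xx uu vv : H) (dd : K) (t κ : ℝ) (ht : 0 ≤ t)
    (hvv : vv = xx + t • ((uu - xx) + (ContinuousLinearMap.adjoint D) dd))
    (hq : ‖uu - p‖ ^ 2 + κ * ‖uu - xx‖ ^ 2 ≤ ‖xx - p‖ ^ 2) :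
    ‖vv - p‖ ^ 2 ≤ ‖xx - p‖ ^ 2 - (1 + κ) * t * ‖uu - xx‖ ^ 2
      + 2 * t * ⟪dd, D xx - D p⟫ + 2 * t ^ 2 * ‖uu - xx‖ ^ 2
      + 2 * t ^ 2 * ‖ContinuousLinearMap.adjoint D‖ ^ 2 * ‖dd‖ ^ 2 := by
  set b : H := uu - xx with hb
  set c : H := (ContinuousLinearMap.adjoint D) dd with hc
  have hsplit : vv - p = (xx - p) + t • (b + c) := by rw [hvv, hb, hc]; module
  have hexp : ‖vv - p‖ ^ 2
      = ‖xx - p‖ ^ 2 + 2 * (t * (⟪xx - p, b⟫ + ⟪xx - p, c⟫)) + t ^ 2 * ‖b + c‖ ^ 2 := by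
    rw [hsplit, normsq_add', real_inner_smul_right, inner_add_right, norm_smul,
      Real.norm_eq_abs, mul_pow, sq_abs]
  have h2ab : 2 * ⟪xx - p, b⟫ = ‖uu - p‖ ^ 2 - ‖xx - p‖ ^ 2 - ‖b‖ ^ 2 := by
    have h := normsq_add' (xx - p) b
    rw [show (xx - p) + b = uu - p by rw [hb]; module] at h
    linarith
  have hac : ⟪xx - p, c⟫ = ⟪dd, D xx - D p⟫ := by
    rw [hc, real_inner_comm, ContinuousLinearMap.adjoint_inner_left, map_sub]
  have hcn : ‖c‖ ≤ ‖ContinuousLinearMap.adjoint D‖ * ‖dd‖ := (ContinuousLinearMap.adjoint D).le_opNorm dd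
  have hbc : ‖b + c‖ ^ 2 ≤ 2 * ‖b‖ ^ 2 + 2 * ‖ContinuousLinearMap.adjoint D‖ ^ 2 * ‖dd‖ ^ 2 := by
    have h1 := pow_le_pow_left₀ (norm_nonneg (b + c)) (norm_add_le b c) 2
    have h2 := pow_le_pow_left₀ (norm_nonneg c) hcn 2
    nlinarith [sq_nonneg (‖b‖ - ‖c‖)]
  have hq' : 2 * ⟪xx - p, b⟫ ≤ -(1 + κ) * ‖b‖ ^ 2 := by
    rw [h2ab]
    have : ‖uu - xx‖ = ‖b‖ := by rw [hb]
    nlinarith [hq]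
  have hbn : ‖uu - xx‖ = ‖b‖ := by rw [hb]
  rw [hexp, hbn]
  nlinarith [mul_le_mul_of_nonneg_left hq' ht, mul_le_mul_of_nonneg_left hbc (sq_nonneg t),
    hac]

lemma aux_le_sqrt' (a b : ℝ) (ha : 0 ≤ a) (h : a ^ 2 ≤ b) : a ≤ Real.sqrt b := by
  have hb : 0 ≤ b := le_trans (sq_nonneg a) h
  nlinarith [Real.sq_sqrt hb, Real.sqrt_nonneg b]


set_option maxHeartbeats 2000000 in
/-- Theorem 3.2 (strong convergence part): split equality fixed point algorithm without prior
knowledge of operator norms, for quasi-pseudocontractive mappings. -/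
theorem sefpp_strong_convergence_without_norms
    {H₁ H₂ H₃ : Type*}
    [NormedAddCommGroup H₁] [InnerProductSpace ℝ H₁] [CompleteSpace H₁]
    [NormedAddCommGroup H₂] [InnerProductSpace ℝ H₂] [CompleteSpace H₂]
    [NormedAddCommGroup H₃] [InnerProductSpace ℝ H₃] [CompleteSpace H₃]
    (D₁ : H₁ →L[ℝ] H₃) (D₂ : H₂ →L[ℝ] H₃)
    (hD₁ : D₁ ≠ 0) (hD₂ : D₂ ≠ 0)
    (L : ℝ) (hL : 1 ≤ L)
    (T₁ : H₁ → H₁) (T₂ : H₂ → H₂)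
    (hT₁lip : ∀ x y : H₁, ‖T₁ x - T₁ y‖ ≤ L * ‖x - y‖)
    (hT₂lip : ∀ x y : H₂, ‖T₂ x - T₂ y‖ ≤ L * ‖x - y‖)
    (hT₁qpc : ∀ (x p : H₁), T₁ p = p → ‖T₁ x - p‖ ^ 2 ≤ ‖x - p‖ ^ 2 + ‖x - T₁ x‖ ^ 2)
    (hT₂qpc : ∀ (y q : H₂), T₂ q = q → ‖T₂ y - q‖ ^ 2 ≤ ‖y - q‖ ^ 2 + ‖y - T₂ y‖ ^ 2)
    (hFix₁ : ∃ p, T₁ p = p) (hFix₂ : ∃ q, T₂ q = q)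
    (hT₁dem : ∀ (u : ℕ → H₁) (z : H₁),
      (∀ h : H₁, Filter.Tendsto (fun n => ⟪u n, h⟫) Filter.atTop (nhds ⟪z, h⟫)) →
      Filter.Tendsto (fun n => ‖u n - T₁ (u n)‖) Filter.atTop (nhds 0) → T₁ z = z)
    (hT₂dem : ∀ (u : ℕ → H₂) (z : H₂),
      (∀ h : H₂, Filter.Tendsto (fun n => ⟪u n, h⟫) Filter.atTop (nhds ⟪z, h⟫)) →
      Filter.Tendsto (fun n => ‖u n - T₂ (u n)‖) Filter.atTop (nhds 0) → T₂ z = z)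
    (η ζ : ℝ) (hη : 0 < η) (hηζ : η < ζ)
    (hζ : ζ < 1 / (1 + Real.sqrt (1 + L ^ 2)))
    (U : H₁ → H₁) (V : H₂ → H₂)
    (hU : ∀ x : H₁, U x = (1 - η) • x + η • T₁ ((1 - ζ) • x + ζ • T₁ x))
    (hV : ∀ y : H₂, V y = (1 - η) • y + η • T₂ ((1 - ζ) • y + ζ • T₂ y))
    (a : ℝ) (ha : 0 < a) (α τ : ℕ → ℝ)
    (hα : ∀ n, a < α n ∧ α n < 1)
    (hτ : ∀ n, 0 < τ n ∧ τ n < 1)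
    (hτsum : Filter.Tendsto (fun N => ∑ n ∈ Finset.range N, τ n) Filter.atTop Filter.atTop)
    (hτsq : Summable fun n => τ n ^ 2)
    (x : ℕ → H₁) (y : ℕ → H₂) (v : ℕ → H₁) (w : ℕ → H₂)
    (hv : ∀ n, v n = (1 - τ n) • x n + τ n • U (x n) +
      τ n • (ContinuousLinearMap.adjoint D₁) (D₂ (y n) - D₁ (x n)))
    (hx : ∀ n, x (n + 1) = (1 - α n) • v n + α n • U (v n))
    (hw : ∀ n, w n = (1 - τ n) • y n + τ n • V (y n) +
      τ n • (ContinuousLinearMap.adjoint D₂) (D₁ (x n) - D₂ (y n)))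
    (hy : ∀ n, y (n + 1) = (1 - α n) • w n + α n • V (w n))
    (hT₁sc : ∀ u : ℕ → H₁, (∃ M : ℝ, ∀ n, ‖u n‖ ≤ M) →
      Filter.Tendsto (fun n => ‖u n - T₁ (u n)‖) Filter.atTop (nhds 0) →
      ∃ (φ : ℕ → ℕ) (l : H₁), StrictMono φ ∧
        Filter.Tendsto (fun n => u (φ n)) Filter.atTop (nhds l))
    (hT₂sc : ∀ u : ℕ → H₂, (∃ M : ℝ, ∀ n, ‖u n‖ ≤ M) →
      Filter.Tendsto (fun n => ‖u n - T₂ (u n)‖) Filter.atTop (nhds 0) →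
      ∃ (φ : ℕ → ℕ) (l : H₂), StrictMono φ ∧
        Filter.Tendsto (fun n => u (φ n)) Filter.atTop (nhds l))
    (hΓ : ∃ (p : H₁) (q : H₂), T₁ p = p ∧ T₂ q = q ∧ D₁ p = D₂ q) :
    ∃ (xs : H₁) (ys : H₂), T₁ xs = xs ∧ T₂ ys = ys ∧ D₁ xs = D₂ ys ∧
      Filter.Tendsto x Filter.atTop (nhds xs) ∧
      Filter.Tendsto y Filter.atTop (nhds ys) := by
  clear hT₁dem hT₂dem hFix₁ hFix₂ hD₁ hD₂
  open Filter in
  obtain ⟨hζ0, hLζ, hLζ2, hζ1⟩ := param_facts' L η ζ hL hη hηζ hζ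
  obtain ⟨p₀, q₀, hp₀, hq₀, hpq₀⟩ := hΓ
  set κ : ℝ := (ζ - η) / η with hκdef
  have hκpos : 0 < κ := div_pos (by linarith) hη
  have hUA : ∀ p : H₁, T₁ p = p → ∀ z : H₁,
      ‖U z - p‖ ^ 2 + κ * ‖U z - z‖ ^ 2 ≤ ‖z - p‖ ^ 2 := by
    intro p hp z
    rw [hκdef, hU z]
    exact lemA' T₁ L η ζ hL hT₁lip p (fun u => hT₁qpc u p hp) hη hηζ hζ z
  have hVA : ∀ q : H₂, T₂ q = q → ∀ z : H₂,
      ‖V z - q‖ ^ 2 + κ * ‖V z - z‖ ^ 2 ≤ ‖z - q‖ ^ 2 := by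
    intro q hq z
    rw [hκdef, hV z]
    exact lemA' T₂ L η ζ hL hT₂lip q (fun u => hT₂qpc u q hq) hη hηζ hζ z
  have hUq : ∀ p : H₁, T₁ p = p → ∀ z : H₁, ‖U z - p‖ ≤ ‖z - p‖ := by
    intro p hp z
    have h := hUA p hp z
    have hk := mul_nonneg hκpos.le (sq_nonneg ‖U z - z‖)
    have h2 : ‖U z - p‖ ^ 2 ≤ ‖z - p‖ ^ 2 := by linarith
    exact (pow_le_pow_iff_left₀ (norm_nonneg _) (norm_nonneg _) two_ne_zero).1 h2
  have hVq : ∀ q : H₂, T₂ q = q → ∀ z : H₂, ‖V z - q‖ ≤ ‖z - q‖ := by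
    intro q hq z
    have h := hVA q hq z
    have hk := mul_nonneg hκpos.le (sq_nonneg ‖V z - z‖)
    have h2 : ‖V z - q‖ ^ 2 ≤ ‖z - q‖ ^ 2 := by linarith
    exact (pow_le_pow_iff_left₀ (norm_nonneg _) (norm_nonneg _) two_ne_zero).1 h2
  set G : ℕ → ℝ := fun n =>
    ‖U (x n) - x n‖ ^ 2 + ‖V (y n) - y n‖ ^ 2 + ‖D₂ (y n) - D₁ (x n)‖ ^ 2 with hGdef
  have hG0 : ∀ n, 0 ≤ G n := by intro n; simp only [hGdef]; positivity
  -- the key one-step inequality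
  have key : ∀ (p : H₁) (q : H₂), T₁ p = p → T₂ q = q → D₁ p = D₂ q → ∀ n : ℕ,
      2 * τ n ≤ κ →
      2 * τ n * (‖ContinuousLinearMap.adjoint D₁‖ ^ 2 + ‖ContinuousLinearMap.adjoint D₂‖ ^ 2) ≤ 1 →
      ‖x (n+1) - p‖ ^ 2 + ‖y (n+1) - q‖ ^ 2 + τ n * G n
        ≤ ‖x n - p‖ ^ 2 + ‖y n - q‖ ^ 2 := by
    intro p q hp hq hpq n hsm1 hsm2
    obtain ⟨hτ0, hτ1⟩ := hτ n
    obtain ⟨hα1, hα2⟩ := hα n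
    have hα0 : (0:ℝ) ≤ α n := le_of_lt (lt_trans ha hα1)
    have hα0' : (0:ℝ) ≤ 1 - α n := by linarith
    have hv' : v n = x n + τ n • ((U (x n) - x n)
        + (ContinuousLinearMap.adjoint D₁) (D₂ (y n) - D₁ (x n))) := by
      rw [hv n]; module
    have h1 := step_ineq' D₁ p (x n) (U (x n)) (v n) (D₂ (y n) - D₁ (x n)) (τ n) κ
      hτ0.le hv' (hUA p hp (x n))
    have hw' : w n = y n + τ n • ((V (y n) - y n)
        + (ContinuousLinearMap.adjoint D₂) (D₁ (x n) - D₂ (y n))) := by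
      rw [hw n]; module
    have h2 := step_ineq' D₂ q (y n) (V (y n)) (w n) (D₁ (x n) - D₂ (y n)) (τ n) κ
      hτ0.le hw' (hVA q hq (y n))
    have h3 : ‖x (n+1) - p‖ ≤ ‖v n - p‖ := by
      rw [hx n]
      have e : ((1 - α n) • v n + α n • U (v n)) - p
          = (1 - α n) • (v n - p) + α n • (U (v n) - p) := by module
      rw [e]
      have t1 : ‖(1 - α n) • (v n - p) + α n • (U (v n) - p)‖
          ≤ (1 - α n) * ‖v n - p‖ + α n * ‖U (v n) - p‖ := by
        refine (norm_add_le _ _).trans ?_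
        rw [norm_smul, norm_smul, Real.norm_eq_abs, Real.norm_eq_abs,
          abs_of_nonneg hα0', abs_of_nonneg hα0]
      have t2 := mul_le_mul_of_nonneg_left (hUq p hp (v n)) hα0
      linarith
    have h3' : ‖x (n+1) - p‖ ^ 2 ≤ ‖v n - p‖ ^ 2 := pow_le_pow_left₀ (norm_nonneg _) h3 2
    have h4 : ‖y (n+1) - q‖ ≤ ‖w n - q‖ := by
      rw [hy n]
      have e : ((1 - α n) • w n + α n • V (w n)) - q
          = (1 - α n) • (w n - q) + α n • (V (w n) - q) := by module
      rw [e]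
      have t1 : ‖(1 - α n) • (w n - q) + α n • (V (w n) - q)‖
          ≤ (1 - α n) * ‖w n - q‖ + α n * ‖V (w n) - q‖ := by
        refine (norm_add_le _ _).trans ?_
        rw [norm_smul, norm_smul, Real.norm_eq_abs, Real.norm_eq_abs,
          abs_of_nonneg hα0', abs_of_nonneg hα0]
      have t2 := mul_le_mul_of_nonneg_left (hVq q hq (w n)) hα0
      linarith
    have h4' : ‖y (n+1) - q‖ ^ 2 ≤ ‖w n - q‖ ^ 2 := pow_le_pow_left₀ (norm_nonneg _) h4 2
    have hnrev : ‖D₁ (x n) - D₂ (y n)‖ = ‖D₂ (y n) - D₁ (x n)‖ := norm_sub_rev _ _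
    rw [hnrev] at h2
    have hcross : ⟪D₂ (y n) - D₁ (x n), D₁ (x n) - D₁ p⟫
        + ⟪D₁ (x n) - D₂ (y n), D₂ (y n) - D₂ q⟫
        = -‖D₂ (y n) - D₁ (x n)‖ ^ 2 := by
      have e2 : (D₁ (x n) - D₁ p) - (D₂ (y n) - D₂ q) = -(D₂ (y n) - D₁ (x n)) := by
        rw [hpq]; abel
      calc ⟪D₂ (y n) - D₁ (x n), D₁ (x n) - D₁ p⟫
            + ⟪D₁ (x n) - D₂ (y n), D₂ (y n) - D₂ q⟫
          = ⟪D₂ (y n) - D₁ (x n), (D₁ (x n) - D₁ p) - (D₂ (y n) - D₂ q)⟫ := by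
            simp only [show D₁ (x n) - D₂ (y n) = -(D₂ (y n) - D₁ (x n)) from by abel,
              inner_neg_left, inner_sub_right]; ring
        _ = ⟪D₂ (y n) - D₁ (x n), -(D₂ (y n) - D₁ (x n))⟫ := by rw [e2]
        _ = -‖D₂ (y n) - D₁ (x n)‖ ^ 2 := by
            rw [inner_neg_right, real_inner_self_eq_norm_sq]
    have hcross' : 2 * τ n * ⟪D₂ (y n) - D₁ (x n), D₁ (x n) - D₁ p⟫
        + 2 * τ n * ⟪D₁ (x n) - D₂ (y n), D₂ (y n) - D₂ q⟫
        = -(2 * τ n * ‖D₂ (y n) - D₁ (x n)‖ ^ 2) := by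
      linear_combination (2 * τ n) * hcross
    have k1 : 0 ≤ (κ - 2 * τ n) * (τ n * (‖U (x n) - x n‖ ^ 2 + ‖V (y n) - y n‖ ^ 2)) :=
      mul_nonneg (by linarith) (mul_nonneg hτ0.le (by positivity))
    have k2 : 0 ≤ (1 - 2 * τ n * (‖ContinuousLinearMap.adjoint D₁‖ ^ 2
        + ‖ContinuousLinearMap.adjoint D₂‖ ^ 2)) * (τ n * ‖D₂ (y n) - D₁ (x n)‖ ^ 2) :=
      mul_nonneg (by linarith) (mul_nonneg hτ0.le (by positivity))
    simp only [hGdef]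
    linarith [h1, h2, h3', h4', hcross', k1, k2]
  -- τ tends to zero
  have hτto0 : Tendsto τ atTop (nhds 0) := by
    have h := hτsq.tendsto_atTop_zero.sqrt
    rw [Real.sqrt_zero] at h
    refine h.congr fun n => ?_
    exact Real.sqrt_sq (hτ n).1.le
  set CD : ℝ := ‖ContinuousLinearMap.adjoint D₁‖ ^ 2 + ‖ContinuousLinearMap.adjoint D₂‖ ^ 2
    with hCDdef
  have hCD0 : 0 ≤ CD := by rw [hCDdef]; positivity
  obtain ⟨N, hN⟩ : ∃ N : ℕ, ∀ n, N ≤ n → 2 * τ n ≤ κ ∧ 2 * τ n * CD ≤ 1 := by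
    have hev1 := hτto0.eventually_lt_const (show (0:ℝ) < κ/2 by linarith)
    have hev2 := hτto0.eventually_lt_const (show (0:ℝ) < 1/(2*(CD+1)) by positivity)
    obtain ⟨N, hNN⟩ := Filter.eventually_atTop.1 (hev1.and hev2)
    refine ⟨N, fun n hn => ?_⟩
    obtain ⟨ha1, ha2⟩ := hNN n hn
    have hτn := (hτ n).1
    constructor
    · linarith
    · nlinarith [(lt_div_iff₀ (by positivity : (0:ℝ) < 2*(CD+1))).1 ha2]
  -- monotone decrease from N on
  have decr : ∀ (p : H₁) (q : H₂), T₁ p = p → T₂ q = q → D₁ p = D₂ q →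
      ∀ m, N ≤ m → ∀ n, m ≤ n →
      ‖x n - p‖ ^ 2 + ‖y n - q‖ ^ 2 ≤ ‖x m - p‖ ^ 2 + ‖y m - q‖ ^ 2 := by
    intro p q hp hq hpq m hm n hn
    induction n, hn using Nat.le_induction with
    | base => exact le_rfl
    | succ n hmn ih =>
      obtain ⟨hs1, hs2⟩ := hN n (le_trans hm hmn)
      have hk := key p q hp hq hpq n hs1 hs2
      have hg := mul_nonneg (hτ n).1.le (hG0 n)
      linarith
  -- boundedness of the iterates
  have hbodyN : ∀ n, N ≤ n →
      ‖x n - p₀‖ ^ 2 + ‖y n - q₀‖ ^ 2 ≤ ‖x N - p₀‖ ^ 2 + ‖y N - q₀‖ ^ 2 :=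
    fun n hn => decr p₀ q₀ hp₀ hq₀ hpq₀ N le_rfl n hn
  set B₀ : ℝ := Real.sqrt (‖x N - p₀‖ ^ 2 + ‖y N - q₀‖ ^ 2) with hB₀
  set M₀ : ℝ := (∑ i ∈ Finset.range (N+1), (‖x i‖ + ‖y i‖)) + (B₀ + ‖p₀‖ + ‖q₀‖) with hM₀
  have hsum0 : 0 ≤ ∑ i ∈ Finset.range (N+1), (‖x i‖ + ‖y i‖) :=
    Finset.sum_nonneg fun i _ => by positivity
  have hB₀0 : 0 ≤ B₀ := Real.sqrt_nonneg _
  have hMx : ∀ n, ‖x n‖ ≤ M₀ := by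
    intro n
    rcases le_or_gt n N with h | h
    · have hmem : n ∈ Finset.range (N+1) := Finset.mem_range.2 (by omega)
      have hs := Finset.single_le_sum (f := fun i => ‖x i‖ + ‖y i‖)
        (fun i _ => by positivity) hmem
      have hs' : ‖x n‖ + ‖y n‖ ≤ ∑ i ∈ Finset.range (N+1), (‖x i‖ + ‖y i‖) := hs
      rw [hM₀]
      have := norm_nonneg (y n)
      have := norm_nonneg p₀
      have := norm_nonneg q₀
      linarith
    · have hb := hbodyN n h.le
      have h1 : ‖x n - p₀‖ ≤ B₀ := by
        rw [hB₀]
        exact aux_le_sqrt' _ _ (norm_nonneg _) (by nlinarith [sq_nonneg ‖y n - q₀‖])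
      have h2 : ‖x n‖ ≤ ‖x n - p₀‖ + ‖p₀‖ := by
        calc ‖x n‖ = ‖(x n - p₀) + p₀‖ := by rw [sub_add_cancel]
          _ ≤ ‖x n - p₀‖ + ‖p₀‖ := norm_add_le _ _
      rw [hM₀]
      have := norm_nonneg q₀
      linarith
  have hMy : ∀ n, ‖y n‖ ≤ M₀ := by
    intro n
    rcases le_or_gt n N with h | h
    · have hmem : n ∈ Finset.range (N+1) := Finset.mem_range.2 (by omega)
      have hs := Finset.single_le_sum (f := fun i => ‖x i‖ + ‖y i‖)
        (fun i _ => by positivity) hmem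
      have hs' : ‖x n‖ + ‖y n‖ ≤ ∑ i ∈ Finset.range (N+1), (‖x i‖ + ‖y i‖) := hs
      rw [hM₀]
      have := norm_nonneg (x n)
      have := norm_nonneg p₀
      have := norm_nonneg q₀
      linarith
    · have hb := hbodyN n h.le
      have h1 : ‖y n - q₀‖ ≤ B₀ := by
        rw [hB₀]
        exact aux_le_sqrt' _ _ (norm_nonneg _) (by nlinarith [sq_nonneg ‖x n - p₀‖])
      have h2 : ‖y n‖ ≤ ‖y n - q₀‖ + ‖q₀‖ := by
        calc ‖y n‖ = ‖(y n - q₀) + q₀‖ := by rw [sub_add_cancel]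
          _ ≤ ‖y n - q₀‖ + ‖q₀‖ := norm_add_le _ _
      rw [hM₀]
      have := norm_nonneg p₀
      linarith
  -- telescoping sums
  have tele : ∀ K, N ≤ K → ∀ M, K ≤ M →
      (‖x M - p₀‖ ^ 2 + ‖y M - q₀‖ ^ 2) + ∑ n ∈ Finset.Ico K M, τ n * G n
        ≤ ‖x K - p₀‖ ^ 2 + ‖y K - q₀‖ ^ 2 := by
    intro K hK M hM
    induction M, hM using Nat.le_induction with
    | base => simp
    | succ M hKM ih =>
      rw [Finset.sum_Ico_succ_top hKM]
      obtain ⟨hs1, hs2⟩ := hN M (le_trans hK hKM)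
      have hk := key p₀ q₀ hp₀ hq₀ hpq₀ M hs1 hs2
      linarith
  -- G is frequently small
  have hfreq : ∀ k : ℕ, ∃ᶠ n in atTop, G n < 1/((k:ℝ)+1) := by
    intro k
    rw [Filter.frequently_atTop]
    intro K
    by_contra hcon
    push_neg at hcon
    set K' := max N K with hK'
    set ε : ℝ := 1/((k:ℝ)+1) with hεdef
    have hε : 0 < ε := by rw [hεdef]; positivity
    have hbound : ∀ M, K' ≤ M →
        ε * ∑ n ∈ Finset.Ico K' M, τ n ≤ ‖x K' - p₀‖ ^ 2 + ‖y K' - q₀‖ ^ 2 := by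
      intro M hM
      have t := tele K' (le_max_left _ _) M hM
      have hle : ε * ∑ n ∈ Finset.Ico K' M, τ n ≤ ∑ n ∈ Finset.Ico K' M, τ n * G n := by
        rw [Finset.mul_sum]
        refine Finset.sum_le_sum fun i hi => ?_
        have hiK : K ≤ i := le_trans (le_max_right N K) (Finset.mem_Ico.1 hi).1
        have hGi := hcon i hiK
        have ht0 := (hτ i).1.le
        nlinarith [mul_le_mul_of_nonneg_left hGi ht0]
      have hΨ0 : 0 ≤ ‖x M - p₀‖ ^ 2 + ‖y M - q₀‖ ^ 2 := by positivity
      linarith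
    set C : ℝ := ‖x K' - p₀‖ ^ 2 + ‖y K' - q₀‖ ^ 2 with hCdef
    obtain ⟨M, hM1, hM2⟩ : ∃ M, K' ≤ M ∧
        (∑ n ∈ Finset.range K', τ n) + C/ε < ∑ n ∈ Finset.range M, τ n := by
      have hev := (hτsum.eventually_gt_atTop
        ((∑ n ∈ Finset.range K', τ n) + C/ε)).and (Filter.eventually_ge_atTop K')
      obtain ⟨M, hh1, hh2⟩ := hev.exists
      exact ⟨M, hh2, hh1⟩
    have hsplit := Finset.sum_range_add_sum_Ico τ hM1
    have hb := hbound M hM1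
    have hico : ∑ n ∈ Finset.Ico K' M, τ n ≤ C/ε := by
      rw [le_div_iff₀ hε]
      nlinarith
    linarith
  obtain ⟨φ, hφmono, hφ⟩ := Filter.extraction_forall_of_frequently hfreq
  have hGφ : Tendsto (fun k => G (φ k)) atTop (nhds 0) :=
    squeeze_zero (fun k => hG0 _) (fun k => (hφ k).le) tendsto_one_div_add_atTop_nhds_zero_nat
  have hGsqrtφ : Tendsto (fun k => Real.sqrt (G (φ k))) atTop (nhds 0) := by
    have h := hGφ.sqrt; rwa [Real.sqrt_zero] at h
  have hEle : ∀ n, ‖U (x n) - x n‖ ≤ Real.sqrt (G n) := by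
    intro n
    refine aux_le_sqrt' _ _ (norm_nonneg _) ?_
    simp only [hGdef]
    nlinarith [sq_nonneg ‖V (y n) - y n‖, sq_nonneg ‖D₂ (y n) - D₁ (x n)‖]
  have hFle : ∀ n, ‖V (y n) - y n‖ ≤ Real.sqrt (G n) := by
    intro n
    refine aux_le_sqrt' _ _ (norm_nonneg _) ?_
    simp only [hGdef]
    nlinarith [sq_nonneg ‖U (x n) - x n‖, sq_nonneg ‖D₂ (y n) - D₁ (x n)‖]
  have hDle : ∀ n, ‖D₂ (y n) - D₁ (x n)‖ ≤ Real.sqrt (G n) := by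
    intro n
    refine aux_le_sqrt' _ _ (norm_nonneg _) ?_
    simp only [hGdef]
    nlinarith [sq_nonneg ‖U (x n) - x n‖, sq_nonneg ‖V (y n) - y n‖]
  have hEφ : Tendsto (fun k => ‖U (x (φ k)) - x (φ k)‖) atTop (nhds 0) :=
    squeeze_zero (fun k => norm_nonneg _) (fun k => hEle _) hGsqrtφ
  have hFφ : Tendsto (fun k => ‖V (y (φ k)) - y (φ k)‖) atTop (nhds 0) :=
    squeeze_zero (fun k => norm_nonneg _) (fun k => hFle _) hGsqrtφ
  have hDφ : Tendsto (fun k => ‖D₂ (y (φ k)) - D₁ (x (φ k))‖) atTop (nhds 0) :=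
    squeeze_zero (fun k => norm_nonneg _) (fun k => hDle _) hGsqrtφ
  -- the fixed-point residuals of T₁, T₂ tend to zero along φ
  have hLζpos : 0 < η * (1 - L * ζ) := mul_pos hη (by linarith)
  have hxT : ∀ n : ℕ, ‖x n - T₁ (x n)‖ ≤ (η * (1 - L * ζ))⁻¹ * ‖U (x n) - x n‖ := by
    intro n
    have h := lemB' T₁ L η ζ hL hT₁lip hη hηζ hζ (x n)
    rw [← hU (x n)] at h
    rw [inv_mul_eq_div, le_div_iff₀ hLζpos]
    linarith
  have hyT : ∀ n : ℕ, ‖y n - T₂ (y n)‖ ≤ (η * (1 - L * ζ))⁻¹ * ‖V (y n) - y n‖ := by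
    intro n
    have h := lemB' T₂ L η ζ hL hT₂lip hη hηζ hζ (y n)
    rw [← hV (y n)] at h
    rw [inv_mul_eq_div, le_div_iff₀ hLζpos]
    linarith
  have hxTφ : Tendsto (fun k => ‖x (φ k) - T₁ (x (φ k))‖) atTop (nhds 0) := by
    have hmul := hEφ.const_mul ((η * (1 - L * ζ))⁻¹)
    rw [mul_zero] at hmul
    exact squeeze_zero (fun k => norm_nonneg _) (fun k => hxT _) hmul
  have hyTφ : Tendsto (fun k => ‖y (φ k) - T₂ (y (φ k))‖) atTop (nhds 0) := by
    have hmul := hFφ.const_mul ((η * (1 - L * ζ))⁻¹)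
    rw [mul_zero] at hmul
    exact squeeze_zero (fun k => norm_nonneg _) (fun k => hyT _) hmul
  -- semicompactness: extract strongly convergent subsequences
  obtain ⟨ψ₁, xs, hψ₁, hxsconv⟩ := hT₁sc (fun k => x (φ k)) ⟨M₀, fun k => hMx _⟩ hxTφ
  obtain ⟨ψ₂, ys, hψ₂, hysconv⟩ := hT₂sc (fun k => y (φ (ψ₁ k))) ⟨M₀, fun k => hMy _⟩
    (hyTφ.comp hψ₁.tendsto_atTop)
  set χ : ℕ → ℕ := fun k => φ (ψ₁ (ψ₂ k)) with hχdef
  have hχmono : StrictMono χ := hφmono.comp (hψ₁.comp hψ₂)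
  have hxχ : Tendsto (fun k => x (χ k)) atTop (nhds xs) := hxsconv.comp hψ₂.tendsto_atTop
  have hyχ : Tendsto (fun k => y (χ k)) atTop (nhds ys) := hysconv
  have hxTχ : Tendsto (fun k => ‖x (χ k) - T₁ (x (χ k))‖) atTop (nhds 0) :=
    hxTφ.comp ((hψ₁.comp hψ₂).tendsto_atTop)
  have hyTχ : Tendsto (fun k => ‖y (χ k) - T₂ (y (χ k))‖) atTop (nhds 0) :=
    hyTφ.comp ((hψ₁.comp hψ₂).tendsto_atTop)
  have hxnorm0 : Tendsto (fun k => ‖x (χ k) - xs‖) atTop (nhds 0) := by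
    have h := (hxχ.sub_const xs).norm
    simpa using h
  have hynorm0 : Tendsto (fun k => ‖y (χ k) - ys‖) atTop (nhds 0) := by
    have h := (hyχ.sub_const ys).norm
    simpa using h
  -- xs, ys are fixed points
  have hTxχ : Tendsto (fun k => T₁ (x (χ k))) atTop (nhds (T₁ xs)) := by
    rw [tendsto_iff_norm_sub_tendsto_zero]
    have hmul := hxnorm0.const_mul L
    rw [mul_zero] at hmul
    exact squeeze_zero (fun k => norm_nonneg _) (fun k => hT₁lip _ _) hmul
  have hTyχ : Tendsto (fun k => T₂ (y (χ k))) atTop (nhds (T₂ ys)) := by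
    rw [tendsto_iff_norm_sub_tendsto_zero]
    have hmul := hynorm0.const_mul L
    rw [mul_zero] at hmul
    exact squeeze_zero (fun k => norm_nonneg _) (fun k => hT₂lip _ _) hmul
  have hfix1 : T₁ xs = xs := by
    have h1 : Tendsto (fun k => ‖x (χ k) - T₁ (x (χ k))‖) atTop (nhds ‖xs - T₁ xs‖) :=
      (hxχ.sub hTxχ).norm
    have h0 := tendsto_nhds_unique h1 hxTχ
    exact (sub_eq_zero.1 (norm_eq_zero.1 h0)).symm
  have hfix2 : T₂ ys = ys := by
    have h1 : Tendsto (fun k => ‖y (χ k) - T₂ (y (χ k))‖) atTop (nhds ‖ys - T₂ ys‖) :=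
      (hyχ.sub hTyχ).norm
    have h0 := tendsto_nhds_unique h1 hyTχ
    exact (sub_eq_zero.1 (norm_eq_zero.1 h0)).symm
  have hDeq : D₁ xs = D₂ ys := by
    have h1 : Tendsto (fun k => ‖D₂ (y (χ k)) - D₁ (x (χ k))‖) atTop
        (nhds ‖D₂ ys - D₁ xs‖) :=
      (((D₂.continuous.tendsto ys).comp hyχ).sub ((D₁.continuous.tendsto xs).comp hxχ)).norm
    have hDχ : Tendsto (fun k => ‖D₂ (y (χ k)) - D₁ (x (χ k))‖) atTop (nhds 0) :=
      hDφ.comp ((hψ₁.comp hψ₂).tendsto_atTop)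
    have h0 := tendsto_nhds_unique h1 hDχ
    exact (sub_eq_zero.1 (norm_eq_zero.1 h0)).symm
  -- strong convergence of the full sequences
  have hΦχ : Tendsto (fun k => ‖x (χ k) - xs‖ ^ 2 + ‖y (χ k) - ys‖ ^ 2) atTop (nhds 0) := by
    have h := (hxnorm0.pow 2).add (hynorm0.pow 2)
    simpa using h
  have hmain : Tendsto (fun n => ‖x n - xs‖ ^ 2 + ‖y n - ys‖ ^ 2) atTop (nhds 0) := by
    rw [Metric.tendsto_atTop]
    intro ε hε
    obtain ⟨k, hk1, hk2⟩ := ((hΦχ.eventually_lt_const hε).and (Filter.eventually_ge_atTop N)).exists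
    refine ⟨χ k, fun n hn => ?_⟩
    have hNχ : N ≤ χ k := le_trans hk2 hχmono.le_apply
    have hd := decr xs ys hfix1 hfix2 hDeq (χ k) hNχ n hn
    rw [Real.dist_eq, sub_zero, abs_of_nonneg (by positivity)]
    linarith
  have hsqrtmain : Tendsto (fun n => Real.sqrt (‖x n - xs‖ ^ 2 + ‖y n - ys‖ ^ 2)) atTop (nhds 0) := by
    have h := hmain.sqrt; rwa [Real.sqrt_zero] at h
  have hxconv : Tendsto x atTop (nhds xs) := by
    rw [tendsto_iff_norm_sub_tendsto_zero]
    exact squeeze_zero (fun n => norm_nonneg _)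
      (fun n => aux_le_sqrt' _ _ (norm_nonneg _) (by nlinarith [sq_nonneg ‖y n - ys‖])) hsqrtmain
  have hyconv : Tendsto y atTop (nhds ys) := by
    rw [tendsto_iff_norm_sub_tendsto_zero]
    exact squeeze_zero (fun n => norm_nonneg _)
      (fun n => aux_le_sqrt' _ _ (norm_nonneg _) (by nlinarith [sq_nonneg ‖x n - xs‖])) hsqrtmain
  exact ⟨xs, ys, hfix1, hfix2, hDeq, hxconv, hyconv⟩
end

section
/- Let H₁, H₂, H₃ be real Hilbert spaces, D₁ : H₁ → H₃ and D₂ : H₂ → H₃ nonzero bounded linear operators with adjoints D₁*, D₂*, L₁ := ‖D₁‖², L₂ := ‖D₂‖², and L ≥ 1. Let T₁ : H₁ → H₁, T₂ : H₂ → H₂ be L-Lipschitz quasi-pseudocontractive mappings with nonempty fixed point sets and T₁ − I, T₂ − I demiclosed at zero. Let (η_n), (ζ_n) satisfy 0 < η̲ ≤ η_n < ζ_n ≤ ζ̄ < 1/(1+√(1+L²)), let 0 < a ≤ α_n ≤ b < 1, and 0 < c ≤ τ_n ≤ d < 2/(L₁+L₂) for all n. Given (x₀, y₀) ∈ H₁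 × H₂, define v_n = x_n + τ_n D₁*(D₂ y_n − D₁ x_n), x_{n+1} = α_n x_n + (1−α_n)[(1−η_n)I + η_n T₁((1−ζ_n)I + ζ_n T₁)] v_n, w_n = y_n + τ_n D₂*(D₁ x_n − D₂ y_n), y_{n+1} = α_n y_n + (1−α_n)[(1−η_n)I + η_n T₂((1−ζ_n)I + ζ_n T₂)] w_n. If Γ := {(x, y) : T₁x = x, T₂y = y, D₁x = D₂y} is nonempty, then (x_n, y_n) converges weakly to some (x*, y*) ∈ Γ. -/
/-!
Write `z n = (x n, y n)` in the `L²` product `H₁ × H₂`, `A (x, y) = D₁ x - D₂ y` and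
`T = T₁ × T₂`. The scheme becomes `z (n+1) = α z + (1 - α) K (z - τ A† A z)` with `K` the
Ishikawa operator `(1 - η) I + η T ((1 - ζ) I + ζ T)`, and `Γ = Fix T ∩ ker A`. For `p ∈ Γ` the
gradient step decreases `‖· - p‖²` by `τ (2 - τ ‖A‖²) ‖A z‖²`, and quasi-pseudocontractivity plus
the Lipschitz bound make `K` decrease it by `η ζ (1 - 2ζ - L²ζ²) ‖u - T u‖²`; the parameter
constraints bound both coefficients away from zero. So `(z n)` is Fejér monotone with respect to
`Γ`, and `A z n → 0`, `z n - T z n → 0`. Demiclosedness and weak continuity of `A` put every weak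
cluster point in `Γ`, and Opial's argument turns this into weak convergence: bounded sequences have
weakly convergent subsequences, and two cluster points `p, p'` in `Γ` coincide because
`⟪z n, p - p'⟫` converges, being affine in `‖z n - p‖²` and `‖z n - p'‖²`.
-/

open scoped RealInnerProductSpace InnerProduct
open Filter Topology

section WeakConvergence

variable {E F : Type*} [NormedAddCommGroup E] [InnerProductSpace ℝ E]
  [NormedAddCommGroup F] [InnerProductSpace ℝ F]

def TendstoWeakly (u : ℕ → E) (z : E) : Prop :=
  ∀ h : E, Tendsto (fun n => ⟪u n, h⟫) atTop (𝓝 ⟪z, h⟫)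

variable {u : ℕ → E} {z : E}

lemma tendstoWeakly_of_tendsto (hu : Tendsto u atTop (𝓝 z)) : TendstoWeakly u z :=
  fun _ => hu.inner tendsto_const_nhds

lemma TendstoWeakly.unique {z' : E} (hz : TendstoWeakly u z) (hz' : TendstoWeakly u z') :
    z = z' :=
  ext_inner_right ℝ fun h => tendsto_nhds_unique (hz h) (hz' h)

lemma TendstoWeakly.map [CompleteSpace E] [CompleteSpace F] (A : E →L[ℝ] F)
    (hu : TendstoWeakly u z) : TendstoWeakly (fun n => A (u n)) (A z) := fun h => by
  simpa only [ContinuousLinearMap.adjoint_inner_right] using hu ((A†) h)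

theorem exists_strictMono_tendstoWeakly_of_bounded [CompleteSpace E] {R : ℝ}
    (hu : ∀ n, ‖u n‖ ≤ R) : ∃ φ : ℕ → ℕ, StrictMono φ ∧ ∃ z, TendstoWeakly (u ∘ φ) z := by
  -- sequential Banach–Alaoglu in the separable closed span `K` of the sequence, read through
  -- the Riesz map of `K`; testing against `h` is testing against its projection onto `K`
  set K := (Submodule.span ℝ (Set.range u)).topologicalClosure
  have hK : ∀ n, u n ∈ K := fun n =>
    Submodule.le_topologicalClosure _ (Submodule.subset_span ⟨n, rfl⟩)
  have : TopologicalSpace.SeparableSpace K :=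
    ((Set.countable_range u).isSeparable.span.closure).separableSpace
  have hball : ∀ n, StrongDual.toWeakDual (InnerProductSpace.toDual ℝ K ⟨u n, hK n⟩) ∈
      WeakDual.toStrongDual ⁻¹' Metric.closedBall 0 R := fun n => by
    simpa using hu n
  obtain ⟨f, -, φ, hφ, hf⟩ := WeakDual.isSeqCompact_closedBall ℝ K 0 R hball
  refine ⟨φ, hφ, (InnerProductSpace.toDual ℝ K).symm (WeakDual.toStrongDual f), fun h => ?_⟩
  have hlim := ((WeakDual.eval_continuous (K.orthogonalProjectionOnto h)).tendsto f).comp hf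
  rw [← Submodule.inner_orthogonalProjectionOnto_eq_of_mem_left,
    InnerProductSpace.toDual_symm_apply]
  refine hlim.congr fun n => ?_
  exact Submodule.inner_orthogonalProjectionOnto_eq_of_mem_left ⟨u (φ n), hK _⟩ h

lemma eq_of_tendstoWeakly_of_tendsto_norm_sub {z₁ z₂ : E} {l₁ l₂ : ℝ}
    (h₁ : Tendsto (fun n => ‖u n - z₁‖) atTop (𝓝 l₁))
    (h₂ : Tendsto (fun n => ‖u n - z₂‖) atTop (𝓝 l₂)) {φ ψ : ℕ → ℕ}
    (hφ : Tendsto φ atTop atTop) (hψ : Tendsto ψ atTop atTop)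
    (hz₁ : TendstoWeakly (u ∘ φ) z₁) (hz₂ : TendstoWeakly (u ∘ ψ) z₂) : z₁ = z₂ := by
  have hpolar : ∀ n, ⟪u n, z₁ - z₂⟫ = (‖u n - z₂‖ ^ 2 - ‖u n - z₁‖ ^ 2 + ‖z₁‖ ^ 2 - ‖z₂‖ ^ 2) / 2 :=
    fun n => by rw [norm_sub_sq_real, norm_sub_sq_real, inner_sub_right]; ring
  have hc : Tendsto (fun n => ⟪u n, z₁ - z₂⟫) atTop
      (𝓝 ((l₂ ^ 2 - l₁ ^ 2 + ‖z₁‖ ^ 2 - ‖z₂‖ ^ 2) / 2)) := by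
    simp_rw [hpolar]
    exact ((((h₂.pow 2).sub (h₁.pow 2)).add_const _).sub_const _).div_const 2
  have e₁ := tendsto_nhds_unique (hz₁ (z₁ - z₂)) (hc.comp hφ)
  have e₂ := tendsto_nhds_unique (hz₂ (z₁ - z₂)) (hc.comp hψ)
  rw [← sub_eq_zero, ← inner_self_eq_zero (𝕜 := ℝ), inner_sub_left, e₁, e₂, sub_self]

theorem exists_tendstoWeakly_of_antitone_norm_sub [CompleteSpace E] {S : Set E}
    (hS : S.Nonempty) (hfejer : ∀ s ∈ S, Antitone fun n => ‖u n - s‖)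
    (hcluster : ∀ (φ : ℕ → ℕ) (z : E), Tendsto φ atTop atTop → TendstoWeakly (u ∘ φ) z → z ∈ S) :
    ∃ z ∈ S, TendstoWeakly u z := by
  obtain ⟨s₀, hs₀⟩ := hS
  have hlim : ∀ s ∈ S, ∃ l, Tendsto (fun n => ‖u n - s‖) atTop (𝓝 l) := fun s hs =>
    ⟨_, tendsto_atTop_ciInf (hfejer s hs) ⟨0, by rintro _ ⟨n, rfl⟩; exact norm_nonneg _⟩⟩
  have hbdd : ∀ n, ‖u n‖ ≤ ‖u 0 - s₀‖ + ‖s₀‖ := fun n =>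
    (norm_le_norm_sub_add _ _).trans (by gcongr; exact hfejer s₀ hs₀ (Nat.zero_le n))
  obtain ⟨φ, hφ, z, hz⟩ := exists_strictMono_tendstoWeakly_of_bounded hbdd
  have hzS := hcluster φ z hφ.tendsto_atTop hz
  refine ⟨z, hzS, fun h => tendsto_of_subseq_tendsto fun ns hns => ?_⟩
  obtain ⟨ms, hms, z', hz'⟩ := exists_strictMono_tendstoWeakly_of_bounded fun n => hbdd (ns n)
  have hns' : Tendsto (ns ∘ ms) atTop atTop := hns.comp hms.tendsto_atTop
  obtain ⟨l, hl⟩ := hlim z hzS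
  obtain ⟨l', hl'⟩ := hlim z' (hcluster _ z' hns' hz')
  obtain rfl := eq_of_tendstoWeakly_of_tendsto_norm_sub hl' hl hns' hφ.tendsto_atTop hz' hz
  exact ⟨ms, hz' h⟩

end WeakConvergence

lemma tendsto_zero_of_add_le {a r : ℕ → ℝ} (ha : ∀ n, 0 ≤ a n) (hr : ∀ n, 0 ≤ r n)
    (h : ∀ n, a (n + 1) + r n ≤ a n) : Tendsto r atTop (𝓝 0) := by
  have hanti : Antitone a := antitone_nat_of_succ_le fun n => by linarith [h n, hr n]
  have hlim := tendsto_atTop_ciInf hanti ⟨0, by rintro _ ⟨n, rfl⟩; exact ha n⟩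
  have hdiff := hlim.sub (hlim.comp (tendsto_add_atTop_nat 1))
  rw [sub_self] at hdiff
  exact squeeze_zero hr (fun n => by simp only [Function.comp_apply]; linarith [h n]) hdiff

lemma tendsto_zero_of_sq_le {g r : ℕ → ℝ} (hr : Tendsto r atTop (𝓝 0)) (hg : ∀ n, 0 ≤ g n)
    (hgr : ∀ n, g n ^ 2 ≤ r n) : Tendsto g atTop (𝓝 0) := by
  have hsq : Tendsto (fun n => g n ^ 2) atTop (𝓝 0) := squeeze_zero (fun _ => by positivity) hgr hr
  simpa [Real.sqrt_sq (hg _)] using hsq.sqrt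

section NormedGroup

variable {E : Type*} [NormedAddCommGroup E]

lemma norm_sub_apply_le {T : E → E} {L : ℝ} (hlip : ∀ x y, ‖T x - T y‖ ≤ L * ‖x - y‖)
    (x y : E) : ‖x - T x‖ ≤ (1 + L) * ‖x - y‖ + ‖y - T y‖ := by
  calc ‖x - T x‖ = ‖(x - y) + (y - T y) + (T y - T x)‖ := by congr 1; abel
    _ ≤ ‖x - y‖ + ‖y - T y‖ + ‖T y - T x‖ := norm_add₃_le
    _ ≤ ‖x - y‖ + ‖y - T y‖ + L * ‖x - y‖ := by grw [hlip y x, norm_sub_rev y x]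
    _ = (1 + L) * ‖x - y‖ + ‖y - T y‖ := by ring

def IsQuasiPseudocontractive (T : E → E) : Prop :=
  ∀ x p, T p = p → ‖T x - p‖ ^ 2 ≤ ‖x - p‖ ^ 2 + ‖x - T x‖ ^ 2

end NormedGroup

section RelaxedIteration

variable {E F : Type*} [NormedAddCommGroup E] [InnerProductSpace ℝ E]
  [NormedAddCommGroup F] [InnerProductSpace ℝ F]

def IsDemiclosedAtZero (T : E → E) : Prop :=
  ∀ (u : ℕ → E) (z : E), TendstoWeakly u z → Tendsto (fun n => ‖u n - T (u n)‖) atTop (𝓝 0) →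
    T z = z

def ishikawa (T : E → E) (η ζ : ℝ) (x : E) : E :=
  (1 - η) • x + η • T ((1 - ζ) • x + ζ • T x)

lemma norm_one_sub_smul_add_smul_sub_sq (t : ℝ) (a b p : E) :
    ‖(1 - t) • a + t • b - p‖ ^ 2 =
      (1 - t) * ‖a - p‖ ^ 2 + t * ‖b - p‖ ^ 2 - t * (1 - t) * ‖a - b‖ ^ 2 := by
  simp only [← real_inner_self_eq_norm_sq, inner_add_left, inner_add_right, inner_sub_left,
    inner_sub_right, real_inner_smul_left, real_inner_smul_right, real_inner_comm b a,
    real_inner_comm p a, real_inner_comm p b]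
  ring

lemma norm_ishikawa_sub_sq_le {T : E → E} {L : ℝ} (hlip : ∀ x y, ‖T x - T y‖ ≤ L * ‖x - y‖)
    (hT : IsQuasiPseudocontractive T) {η ζ : ℝ} (hη : 0 ≤ η) (hηζ : η ≤ ζ) {p : E}
    (hp : T p = p) (x : E) :
    ‖ishikawa T η ζ x - p‖ ^ 2 ≤
      ‖x - p‖ ^ 2 - η * ζ * (1 - 2 * ζ - ζ ^ 2 * L ^ 2) * ‖x - T x‖ ^ 2 := by
  set y := (1 - ζ) • x + ζ • T x
  have hζ : 0 ≤ ζ := hη.trans hηζ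
  have hTxTy : ‖T x - T y‖ ^ 2 ≤ L ^ 2 * ζ ^ 2 * ‖x - T x‖ ^ 2 := by
    have hxy : x - y = ζ • (x - T x) := by simp only [y]; module
    calc ‖T x - T y‖ ^ 2 ≤ (L * ‖x - y‖) ^ 2 := pow_le_pow_left₀ (norm_nonneg _) (hlip x y) 2
      _ = L ^ 2 * ζ ^ 2 * ‖x - T x‖ ^ 2 := by
        rw [hxy, norm_smul, Real.norm_eq_abs, mul_pow, mul_pow, sq_abs]; ring
  have hTy : ‖T y - p‖ ^ 2 ≤
      ‖x - p‖ ^ 2 + (1 - ζ) * ‖x - T y‖ ^ 2 - ζ * (1 - 2 * ζ - ζ ^ 2 * L ^ 2) * ‖x - T x‖ ^ 2 := by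
    have hy := norm_one_sub_smul_add_smul_sub_sq ζ x (T x) p
    have hyTy := norm_one_sub_smul_add_smul_sub_sq ζ x (T x) (T y)
    have hTx := mul_le_mul_of_nonneg_left (hT x p hp) hζ
    have hTxTy' := mul_le_mul_of_nonneg_left hTxTy hζ
    linarith [hT y p hp]
  have hout := norm_one_sub_smul_add_smul_sub_sq η x (T y) p
  rw [show ishikawa T η ζ x = (1 - η) • x + η • T y from rfl, hout]
  nlinarith [mul_le_mul_of_nonneg_left hTy hη, mul_nonneg hη (sub_nonneg.2 hηζ),
    sq_nonneg ‖x - T y‖]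

lemma one_sub_two_mul_sub_sq_mul_sq_pos {L ζ : ℝ} (hζ : 0 ≤ ζ)
    (hζL : ζ < 1 / (1 + √(1 + L ^ 2))) : 0 < 1 - 2 * ζ - ζ ^ 2 * L ^ 2 := by
  have hs : 1 ≤ √(1 + L ^ 2) := Real.one_le_sqrt.2 (by nlinarith [sq_nonneg L])
  have hs2 : √(1 + L ^ 2) ^ 2 = 1 + L ^ 2 := Real.sq_sqrt (by positivity)
  rw [lt_div_iff₀ (by positivity)] at hζL
  -- `1 / (1 + √(1 + L²))` is the positive root of `1 - 2ζ - L²ζ²`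
  have hfac : 1 - 2 * ζ - ζ ^ 2 * L ^ 2 =
      (1 - ζ * (1 + √(1 + L ^ 2))) * (1 + ζ * (√(1 + L ^ 2) - 1)) := by
    linear_combination ζ ^ 2 * hs2
  rw [hfac]
  exact mul_pos (by linarith) (by nlinarith)

lemma norm_adjoint_apply_le [CompleteSpace E] [CompleteSpace F] (A : E →L[ℝ] F) (e : F) :
    ‖(A†) e‖ ≤ ‖A‖ * ‖e‖ := by
  simpa only [LinearIsometryEquiv.norm_map] using (A†).le_opNorm e

lemma norm_sub_smul_adjoint_sub_sq_le [CompleteSpace E] [CompleteSpace F] (A : E →L[ℝ] F)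
    {p : E} (hp : A p = 0) (τ : ℝ) (z : E) :
    ‖z - τ • (A†) (A z) - p‖ ^ 2 ≤ ‖z - p‖ ^ 2 - τ * (2 - τ * ‖A‖ ^ 2) * ‖A z‖ ^ 2 := by
  have hinner : ⟪z - p, (A†) (A z)⟫ = ‖A z‖ ^ 2 := by
    rw [ContinuousLinearMap.adjoint_inner_right, map_sub, hp, sub_zero,
      real_inner_self_eq_norm_sq]
  have hnorm : ‖(A†) (A z)‖ ^ 2 ≤ ‖A‖ ^ 2 * ‖A z‖ ^ 2 := by
    rw [← mul_pow]; exact pow_le_pow_left₀ (norm_nonneg _) (norm_adjoint_apply_le A _) 2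
  rw [sub_right_comm, norm_sub_sq_real, real_inner_smul_right, hinner, norm_smul,
    Real.norm_eq_abs, mul_pow, sq_abs]
  nlinarith [mul_le_mul_of_nonneg_left hnorm (sq_nonneg τ)]

lemma norm_relaxed_step_sub_sq_le [CompleteSpace E] [CompleteSpace F] (A : E →L[ℝ] F)
    {T : E → E} {L : ℝ} (hlip : ∀ x y, ‖T x - T y‖ ≤ L * ‖x - y‖)
    (hT : IsQuasiPseudocontractive T) {α η ζ τ : ℝ} (hα₀ : 0 ≤ α) (hα₁ : α ≤ 1) (hη : 0 ≤ η)
    (hηζ : η ≤ ζ) {p : E} (hTp : T p = p) (hAp : A p = 0) {z u : E}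
    (hu : u = z - τ • (A†) (A z)) :
    ‖α • z + (1 - α) • ishikawa T η ζ u - p‖ ^ 2 ≤ ‖z - p‖ ^ 2 - (1 - α) *
      (τ * (2 - τ * ‖A‖ ^ 2) * ‖A z‖ ^ 2 +
        η * ζ * (1 - 2 * ζ - ζ ^ 2 * L ^ 2) * ‖u - T u‖ ^ 2) := by
  have hK := norm_ishikawa_sub_sq_le hlip hT hη hηζ hTp u
  have hgrad := norm_sub_smul_adjoint_sub_sq_le A hAp τ z
  rw [← hu] at hgrad
  have havg := norm_one_sub_smul_add_smul_sub_sq (1 - α) z (ishikawa T η ζ u) p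
  rw [sub_sub_cancel] at havg
  have hKz : ‖ishikawa T η ζ u - p‖ ^ 2 ≤ ‖z - p‖ ^ 2 - (τ * (2 - τ * ‖A‖ ^ 2) * ‖A z‖ ^ 2 +
      η * ζ * (1 - 2 * ζ - ζ ^ 2 * L ^ 2) * ‖u - T u‖ ^ 2) := by
    linarith
  rw [havg]
  nlinarith [mul_le_mul_of_nonneg_left hKz (sub_nonneg.2 hα₁),
    mul_nonneg (sub_nonneg.2 hα₁) hα₀, sq_nonneg ‖z - ishikawa T η ζ u‖]

lemma exists_pos_fejer_residual [CompleteSpace E] [CompleteSpace F] (A : E →L[ℝ] F)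
    {T : E → E} {L : ℝ} (hlip : ∀ x y, ‖T x - T y‖ ≤ L * ‖x - y‖)
    (hT : IsQuasiPseudocontractive T) {ηlo ζhi a b c d : ℝ} (hηlo : 0 < ηlo)
    (hζhi : ζhi < 1 / (1 + √(1 + L ^ 2))) (ha : 0 ≤ a) (hb : b < 1) (hc : 0 < c)
    (hd : d * ‖A‖ ^ 2 < 2) {η ζ α τ : ℕ → ℝ} (hηζ : ∀ n, ηlo ≤ η n ∧ η n ≤ ζ n ∧ ζ n ≤ ζhi)
    (hα : ∀ n, a ≤ α n ∧ α n ≤ b) (hτ : ∀ n, c ≤ τ n ∧ τ n ≤ d) {z u : ℕ → E}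
    (hu : ∀ n, u n = z n - τ n • (A†) (A (z n)))
    (hz : ∀ n, z (n + 1) = α n • z n + (1 - α n) • ishikawa T (η n) (ζ n) (u n)) :
    ∃ κ > 0, ∀ p, T p = p → A p = 0 → ∀ n,
      ‖z (n + 1) - p‖ ^ 2 + κ * (‖A (z n)‖ ^ 2 + ‖u n - T (u n)‖ ^ 2) ≤ ‖z n - p‖ ^ 2 := by
  have hζhi₀ : 0 ≤ ζhi := hηlo.le.trans ((hηζ 0).1.trans ((hηζ 0).2.1.trans (hηζ 0).2.2))
  set γ := c * (2 - d * ‖A‖ ^ 2)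
  set δ := ηlo ^ 2 * (1 - 2 * ζhi - ζhi ^ 2 * L ^ 2)
  have hδ : 0 < δ := mul_pos (by positivity) (one_sub_two_mul_sub_sq_mul_sq_pos hζhi₀ hζhi)
  refine ⟨(1 - b) * min γ δ, mul_pos (by linarith) (lt_min (mul_pos hc (by linarith)) hδ),
    fun p hTp hAp n => ?_⟩
  obtain ⟨hηlo_n, hηζ_n, hζhi_n⟩ := hηζ n
  obtain ⟨hα₀, hα₁⟩ := hα n
  obtain ⟨hτ₀, hτ₁⟩ := hτ n
  have hstep := norm_relaxed_step_sub_sq_le A hlip hT (ha.trans hα₀) (hα₁.trans hb.le)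
    (hηlo.le.trans hηlo_n) hηζ_n hTp hAp (hu n)
  rw [← hz n] at hstep
  have hγ_n : γ ≤ τ n * (2 - τ n * ‖A‖ ^ 2) := by
    have : 0 ≤ ‖A‖ ^ 2 := by positivity
    nlinarith [mul_le_mul_of_nonneg_right hτ₁ this]
  have hδ_n : δ ≤ η n * ζ n * (1 - 2 * ζ n - ζ n ^ 2 * L ^ 2) := by
    have hζ₀ : 0 ≤ ζ n := hηlo.le.trans (hηlo_n.trans hηζ_n)
    have hsq : ηlo ^ 2 ≤ η n * ζ n := by nlinarith
    have hcoef : 1 - 2 * ζhi - ζhi ^ 2 * L ^ 2 ≤ 1 - 2 * ζ n - ζ n ^ 2 * L ^ 2 := by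
      nlinarith [mul_le_mul_of_nonneg_right (pow_le_pow_left₀ hζ₀ hζhi_n 2) (sq_nonneg L)]
    exact mul_le_mul hsq hcoef (one_sub_two_mul_sub_sq_mul_sq_pos hζhi₀ hζhi).le
      (mul_nonneg (hηlo.le.trans hηlo_n) hζ₀)
  have hmin : min γ δ * (‖A (z n)‖ ^ 2 + ‖u n - T (u n)‖ ^ 2) ≤ τ n * (2 - τ n * ‖A‖ ^ 2) *
      ‖A (z n)‖ ^ 2 + η n * ζ n * (1 - 2 * ζ n - ζ n ^ 2 * L ^ 2) * ‖u n - T (u n)‖ ^ 2 := by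
    rw [mul_add]
    gcongr
    · exact (min_le_left γ δ).trans hγ_n
    · exact (min_le_right γ δ).trans hδ_n
  have hmin₀ : 0 ≤ min γ δ * (‖A (z n)‖ ^ 2 + ‖u n - T (u n)‖ ^ 2) :=
    mul_nonneg (le_min (mul_pos hc (by linarith)).le hδ.le)
      (add_nonneg (sq_nonneg _) (sq_nonneg _))
  nlinarith [mul_le_mul (by linarith : 1 - b ≤ 1 - α n) hmin hmin₀ (by linarith)]

lemma tendsto_residuals_zero [CompleteSpace E] [CompleteSpace F] (A : E →L[ℝ] F) {T : E → E}
    {L : ℝ} (hlip : ∀ x y, ‖T x - T y‖ ≤ L * ‖x - y‖) {d : ℝ} {τ : ℕ → ℝ}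
    (hτ : ∀ n, |τ n| ≤ d) {z u : ℕ → E} (hu : ∀ n, u n = z n - τ n • (A†) (A (z n))) {κ : ℝ}
    (hκ : 0 < κ) {p : E} (hfejer : ∀ n,
      ‖z (n + 1) - p‖ ^ 2 + κ * (‖A (z n)‖ ^ 2 + ‖u n - T (u n)‖ ^ 2) ≤ ‖z n - p‖ ^ 2) :
    Tendsto (fun n => ‖A (z n)‖) atTop (𝓝 0) ∧
      Tendsto (fun n => ‖z n - T (z n)‖) atTop (𝓝 0) := by
  have hres : Tendsto (fun n => ‖A (z n)‖ ^ 2 + ‖u n - T (u n)‖ ^ 2) atTop (𝓝 0) := by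
    have := (tendsto_zero_of_add_le (a := fun n => ‖z n - p‖ ^ 2) (fun _ => by positivity)
      (fun _ => by positivity) hfejer).const_mul κ⁻¹
    simpa [inv_mul_cancel_left₀ hκ.ne'] using this
  have hAz := tendsto_zero_of_sq_le hres (fun _ => norm_nonneg _)
    fun _ => le_add_of_nonneg_right (by positivity)
  have huT := tendsto_zero_of_sq_le hres (fun _ => norm_nonneg _)
    fun _ => le_add_of_nonneg_left (by positivity)
  have hzu : Tendsto (fun n => ‖z n - u n‖) atTop (𝓝 0) := by
    refine squeeze_zero (fun _ => norm_nonneg _) (fun n => ?_)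
      (by simpa using hAz.const_mul (d * ‖A‖))
    rw [hu n, sub_sub_cancel, norm_smul, Real.norm_eq_abs, mul_assoc]
    exact mul_le_mul (hτ n) (norm_adjoint_apply_le A _) (norm_nonneg _)
      ((abs_nonneg _).trans (hτ n))
  refine ⟨hAz, squeeze_zero (fun _ => norm_nonneg _) (fun n => norm_sub_apply_le hlip _ (u n)) ?_⟩
  simpa using (hzu.const_mul (1 + L)).add huT

theorem exists_tendstoWeakly_of_relaxed_iteration [CompleteSpace E] [CompleteSpace F]
    (A : E →L[ℝ] F) {T : E → E} {L : ℝ} (hlip : ∀ x y, ‖T x - T y‖ ≤ L * ‖x - y‖)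
    (hT : IsQuasiPseudocontractive T) (hdem : IsDemiclosedAtZero T) {ηlo ζhi a b c d : ℝ}
    (hηlo : 0 < ηlo) (hζhi : ζhi < 1 / (1 + √(1 + L ^ 2))) (ha : 0 ≤ a) (hb : b < 1)
    (hc : 0 < c) (hd : d * ‖A‖ ^ 2 < 2) {η ζ α τ : ℕ → ℝ}
    (hηζ : ∀ n, ηlo ≤ η n ∧ η n ≤ ζ n ∧ ζ n ≤ ζhi) (hα : ∀ n, a ≤ α n ∧ α n ≤ b)
    (hτ : ∀ n, c ≤ τ n ∧ τ n ≤ d) {z u : ℕ → E} (hu : ∀ n, u n = z n - τ n • (A†) (A (z n)))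
    (hz : ∀ n, z (n + 1) = α n • z n + (1 - α n) • ishikawa T (η n) (ζ n) (u n))
    (hΓ : ∃ p, T p = p ∧ A p = 0) :
    ∃ p, T p = p ∧ A p = 0 ∧ TendstoWeakly z p := by
  obtain ⟨κ, hκ, hfejer⟩ :=
    exists_pos_fejer_residual A hlip hT hηlo hζhi ha hb hc hd hηζ hα hτ hu hz
  obtain ⟨p₀, hTp₀, hAp₀⟩ := hΓ
  obtain ⟨hAz, hzT⟩ := tendsto_residuals_zero A hlip
    (fun n => (abs_of_pos (hc.trans_le (hτ n).1)).trans_le (hτ n).2) hu hκ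
    (hfejer p₀ hTp₀ hAp₀)
  have hmono : ∀ s ∈ {p | T p = p ∧ A p = 0}, Antitone fun n => ‖z n - s‖ := by
    rintro s ⟨hTs, hAs⟩
    refine antitone_nat_of_succ_le fun n => ?_
    refine (pow_le_pow_iff_left₀ (norm_nonneg _) (norm_nonneg _) two_ne_zero).1 ?_
    nlinarith [hfejer s hTs hAs n, mul_nonneg hκ.le
      (add_nonneg (sq_nonneg ‖A (z n)‖) (sq_nonneg ‖u n - T (u n)‖))]
  have hcluster : ∀ (φ : ℕ → ℕ) (q : E), Tendsto φ atTop atTop → TendstoWeakly (z ∘ φ) q →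
      q ∈ {p | T p = p ∧ A p = 0} := fun φ q hφ hq =>
    ⟨hdem _ q hq (hzT.comp hφ), (hq.map A).unique
      (tendstoWeakly_of_tendsto (tendsto_zero_iff_norm_tendsto_zero.2 (hAz.comp hφ)))⟩
  obtain ⟨p, ⟨hTp, hAp⟩, hp⟩ :=
    exists_tendstoWeakly_of_antitone_norm_sub (S := {p | T p = p ∧ A p = 0}) ⟨p₀, hTp₀, hAp₀⟩
      hmono hcluster
  exact ⟨p, hTp, hAp, hp⟩

end RelaxedIteration

section SplitEquality

variable {E₁ E₂ : Type*} [NormedAddCommGroup E₁] [NormedAddCommGroup E₂] {T₁ : E₁ → E₁}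
  {T₂ : E₂ → E₂}

lemma lipschitz_withLp_map_prodMap {L : ℝ} (hL : 0 ≤ L)
    (hT₁ : ∀ x y, ‖T₁ x - T₁ y‖ ≤ L * ‖x - y‖) (hT₂ : ∀ x y, ‖T₂ x - T₂ y‖ ≤ L * ‖x - y‖)
    (z z' : WithLp 2 (E₁ × E₂)) :
    ‖WithLp.map 2 (Prod.map T₁ T₂) z - WithLp.map 2 (Prod.map T₁ T₂) z'‖ ≤ L * ‖z - z'‖ := by
  refine (pow_le_pow_iff_left₀ (norm_nonneg _) (by positivity) two_ne_zero).1 ?_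
  rw [mul_pow, WithLp.prod_norm_sq_eq_of_L2, WithLp.prod_norm_sq_eq_of_L2]
  have h₁ := pow_le_pow_left₀ (norm_nonneg _) (hT₁ z.fst z'.fst) 2
  have h₂ := pow_le_pow_left₀ (norm_nonneg _) (hT₂ z.snd z'.snd) 2
  simp only [WithLp.sub_fst, WithLp.sub_snd, WithLp.map, WithLp.toLp_fst, WithLp.toLp_snd,
    Prod.map_fst, Prod.map_snd, WithLp.ofLp_fst, WithLp.ofLp_snd] at *
  nlinarith

lemma IsQuasiPseudocontractive.withLp_map_prodMap (hT₁ : IsQuasiPseudocontractive T₁)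
    (hT₂ : IsQuasiPseudocontractive T₂) :
    IsQuasiPseudocontractive (WithLp.map 2 (Prod.map T₁ T₂)) := fun z p hp => by
  have hp₁ : T₁ p.fst = p.fst := congrArg WithLp.fst hp
  have hp₂ : T₂ p.snd = p.snd := congrArg WithLp.snd hp
  simp only [WithLp.prod_norm_sq_eq_of_L2]
  have := hT₁ z.fst p.fst hp₁
  have := hT₂ z.snd p.snd hp₂
  simp only [WithLp.sub_fst, WithLp.sub_snd, WithLp.map, WithLp.toLp_fst, WithLp.toLp_snd,
    Prod.map_fst, Prod.map_snd, WithLp.ofLp_fst, WithLp.ofLp_snd] at *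
  linarith

variable [InnerProductSpace ℝ E₁] [InnerProductSpace ℝ E₂]
  {F : Type*} [NormedAddCommGroup F] [InnerProductSpace ℝ F]

lemma TendstoWeakly.fst {u : ℕ → WithLp 2 (E₁ × E₂)} {z : WithLp 2 (E₁ × E₂)}
    (hu : TendstoWeakly u z) : TendstoWeakly (fun n => (u n).fst) z.fst := fun h => by
  simpa using hu (WithLp.toLp 2 (h, 0))

lemma TendstoWeakly.snd {u : ℕ → WithLp 2 (E₁ × E₂)} {z : WithLp 2 (E₁ × E₂)}
    (hu : TendstoWeakly u z) : TendstoWeakly (fun n => (u n).snd) z.snd := fun h => by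
  simpa using hu (WithLp.toLp 2 (0, h))

lemma IsDemiclosedAtZero.withLp_map_prodMap (hT₁ : IsDemiclosedAtZero T₁)
    (hT₂ : IsDemiclosedAtZero T₂) : IsDemiclosedAtZero (WithLp.map 2 (Prod.map T₁ T₂)) :=
  fun u z hu hres => by
  set T := WithLp.map 2 (Prod.map T₁ T₂)
  have h₁ := hT₁ _ _ hu.fst <| squeeze_zero (fun _ => norm_nonneg _)
    (fun n => WithLp.norm_fst_le _ (u n - T (u n))) hres
  have h₂ := hT₂ _ _ hu.snd <| squeeze_zero (fun _ => norm_nonneg _)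
    (fun n => WithLp.norm_snd_le _ (u n - T (u n))) hres
  exact WithLp.ofLp_injective 2 (Prod.ext h₁ h₂)

def splitEqualityOp (D₁ : E₁ →L[ℝ] F) (D₂ : E₂ →L[ℝ] F) : WithLp 2 (E₁ × E₂) →L[ℝ] F :=
  D₁ ∘L WithLp.fstL 2 ℝ E₁ E₂ - D₂ ∘L WithLp.sndL 2 ℝ E₁ E₂

variable {D₁ : E₁ →L[ℝ] F} {D₂ : E₂ →L[ℝ] F}

lemma splitEqualityOp_apply (z : WithLp 2 (E₁ × E₂)) :
    splitEqualityOp D₁ D₂ z = D₁ z.fst - D₂ z.snd :=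
  rfl

lemma adjoint_splitEqualityOp_apply [CompleteSpace E₁] [CompleteSpace E₂] [CompleteSpace F]
    (e : F) : ((splitEqualityOp D₁ D₂)†) e = WithLp.toLp 2 ((D₁†) e, -(D₂†) e) := by
  refine ext_inner_right ℝ fun z => ?_
  rw [ContinuousLinearMap.adjoint_inner_left, splitEqualityOp_apply, WithLp.prod_inner_apply,
    inner_sub_right, WithLp.ofLp_toLp, inner_neg_left, ContinuousLinearMap.adjoint_inner_left,
    ContinuousLinearMap.adjoint_inner_left, sub_eq_add_neg]
  rfl

lemma sq_norm_splitEqualityOp_le : ‖splitEqualityOp D₁ D₂‖ ^ 2 ≤ ‖D₁‖ ^ 2 + ‖D₂‖ ^ 2 := by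
  have hD : 0 ≤ ‖D₁‖ ^ 2 + ‖D₂‖ ^ 2 := by positivity
  refine (Real.le_sqrt (norm_nonneg (splitEqualityOp D₁ D₂)) hD).1 <|
    ContinuousLinearMap.opNorm_le_bound _ (Real.sqrt_nonneg _) fun z => ?_
  rw [WithLp.prod_norm_eq_of_L2, ← Real.sqrt_mul hD]
  refine Real.le_sqrt_of_sq_le ?_
  calc ‖splitEqualityOp D₁ D₂ z‖ ^ 2 ≤ (‖D₁‖ * ‖z.fst‖ + ‖D₂‖ * ‖z.snd‖) ^ 2 := by
        rw [splitEqualityOp_apply]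
        refine pow_le_pow_left₀ (norm_nonneg _) ((norm_sub_le _ _).trans ?_) 2
        gcongr <;> exact ContinuousLinearMap.le_opNorm _ _
    _ ≤ _ := by nlinarith [sq_nonneg (‖D₁‖ * ‖z.snd‖ - ‖D₂‖ * ‖z.fst‖)]

lemma mul_sq_norm_splitEqualityOp_lt {d : ℝ} (hd₀ : 0 < d)
    (hd : d < 2 / (‖D₁‖ ^ 2 + ‖D₂‖ ^ 2)) : d * ‖splitEqualityOp D₁ D₂‖ ^ 2 < 2 := by
  have hD : 0 < ‖D₁‖ ^ 2 + ‖D₂‖ ^ 2 := (div_pos_iff_of_pos_left two_pos).1 (hd₀.trans hd)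
  calc d * ‖splitEqualityOp D₁ D₂‖ ^ 2 ≤ d * (‖D₁‖ ^ 2 + ‖D₂‖ ^ 2) := by
        gcongr; exact sq_norm_splitEqualityOp_le
    _ < 2 := (lt_div_iff₀ hD).1 hd

lemma sub_smul_adjoint_splitEqualityOp_apply [CompleteSpace E₁] [CompleteSpace E₂]
    [CompleteSpace F] (τ : ℝ) (x : E₁) (y : E₂) :
    WithLp.toLp 2 (x, y) -
        τ • ((splitEqualityOp D₁ D₂)†) (splitEqualityOp D₁ D₂ (WithLp.toLp 2 (x, y))) =
      WithLp.toLp 2 (x + τ • (D₁†) (D₂ y - D₁ x), y + τ • (D₂†) (D₁ x - D₂ y)) := by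
  rw [adjoint_splitEqualityOp_apply, splitEqualityOp_apply, ← WithLp.toLp_smul,
    ← WithLp.toLp_sub]
  congr 1
  ext <;> simp [map_sub] <;> module

end SplitEquality

theorem sefpp_weak_convergence_chang_general
    {H₁ H₂ H₃ : Type*}
    [NormedAddCommGroup H₁] [InnerProductSpace ℝ H₁] [CompleteSpace H₁]
    [NormedAddCommGroup H₂] [InnerProductSpace ℝ H₂] [CompleteSpace H₂]
    [NormedAddCommGroup H₃] [InnerProductSpace ℝ H₃] [CompleteSpace H₃]
    (D₁ : H₁ →L[ℝ] H₃) (D₂ : H₂ →L[ℝ] H₃)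
    (L₁ L₂ : ℝ) (hL₁ : L₁ = ‖D₁‖ ^ 2) (hL₂ : L₂ = ‖D₂‖ ^ 2)
    (L : ℝ) (hL : 1 ≤ L)
    (T₁ : H₁ → H₁) (T₂ : H₂ → H₂)
    (hT₁lip : ∀ x y : H₁, ‖T₁ x - T₁ y‖ ≤ L * ‖x - y‖)
    (hT₂lip : ∀ x y : H₂, ‖T₂ x - T₂ y‖ ≤ L * ‖x - y‖)
    (hT₁qpc : ∀ (x p : H₁), T₁ p = p → ‖T₁ x - p‖ ^ 2 ≤ ‖x - p‖ ^ 2 + ‖x - T₁ x‖ ^ 2)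
    (hT₂qpc : ∀ (y q : H₂), T₂ q = q → ‖T₂ y - q‖ ^ 2 ≤ ‖y - q‖ ^ 2 + ‖y - T₂ y‖ ^ 2)
    (hT₁dem : ∀ (u : ℕ → H₁) (z : H₁),
      (∀ h : H₁, Filter.Tendsto (fun n => ⟪u n, h⟫) Filter.atTop (nhds ⟪z, h⟫)) →
      Filter.Tendsto (fun n => ‖u n - T₁ (u n)‖) Filter.atTop (nhds 0) → T₁ z = z)
    (hT₂dem : ∀ (u : ℕ → H₂) (z : H₂),
      (∀ h : H₂, Filter.Tendsto (fun n => ⟪u n, h⟫) Filter.atTop (nhds ⟪z, h⟫)) →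
      Filter.Tendsto (fun n => ‖u n - T₂ (u n)‖) Filter.atTop (nhds 0) → T₂ z = z)
    (ηlo ζhi : ℝ) (hηlo : 0 < ηlo) (hζhi : ζhi < 1 / (1 + Real.sqrt (1 + L ^ 2)))
    (η ζ : ℕ → ℝ)
    (hηζ : ∀ n, ηlo ≤ η n ∧ η n < ζ n ∧ ζ n ≤ ζhi)
    (a b c d : ℝ) (ha : 0 < a) (hb : b < 1) (hc : 0 < c) (hd : d < 2 / (L₁ + L₂))
    (α τ : ℕ → ℝ)
    (hα : ∀ n, a ≤ α n ∧ α n ≤ b)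
    (hτ : ∀ n, c ≤ τ n ∧ τ n ≤ d)
    (x : ℕ → H₁) (y : ℕ → H₂) (v : ℕ → H₁) (w : ℕ → H₂)
    (hv : ∀ n, v n = x n + τ n • (ContinuousLinearMap.adjoint D₁) (D₂ (y n) - D₁ (x n)))
    (hx : ∀ n, x (n + 1) = α n • x n + (1 - α n) •
      ((1 - η n) • v n + η n • T₁ ((1 - ζ n) • v n + ζ n • T₁ (v n))))
    (hw : ∀ n, w n = y n + τ n • (ContinuousLinearMap.adjoint D₂) (D₁ (x n) - D₂ (y n)))
    (hy : ∀ n, y (n + 1) = α n • y n + (1 - α n) •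
      ((1 - η n) • w n + η n • T₂ ((1 - ζ n) • w n + ζ n • T₂ (w n))))
    (hΓ : ∃ (p : H₁) (q : H₂), T₁ p = p ∧ T₂ q = q ∧ D₁ p = D₂ q) :
    ∃ (xs : H₁) (ys : H₂), T₁ xs = xs ∧ T₂ ys = ys ∧ D₁ xs = D₂ ys ∧
      (∀ z : H₁, Filter.Tendsto (fun n => ⟪x n, z⟫) Filter.atTop (nhds ⟪xs, z⟫)) ∧
      (∀ z : H₂, Filter.Tendsto (fun n => ⟪y n, z⟫) Filter.atTop (nhds ⟪ys, z⟫)) := by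
  subst hL₁ hL₂
  obtain ⟨p, q, hp, hq, hpq⟩ := hΓ
  obtain ⟨s, hTs, hAs, hs⟩ := exists_tendstoWeakly_of_relaxed_iteration (splitEqualityOp D₁ D₂)
    (lipschitz_withLp_map_prodMap (zero_le_one.trans hL) hT₁lip hT₂lip)
    (IsQuasiPseudocontractive.withLp_map_prodMap hT₁qpc hT₂qpc)
    (IsDemiclosedAtZero.withLp_map_prodMap hT₁dem hT₂dem) hηlo hζhi ha.le hb hc
    (mul_sq_norm_splitEqualityOp_lt (hc.trans_le ((hτ 0).1.trans (hτ 0).2)) hd)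
    (fun n => ⟨(hηζ n).1, (hηζ n).2.1.le, (hηζ n).2.2⟩) hα hτ
    (z := fun n => WithLp.toLp 2 (x n, y n)) (u := fun n => WithLp.toLp 2 (v n, w n))
    (fun n => by rw [sub_smul_adjoint_splitEqualityOp_apply, hv n, hw n])
    (fun n => by rw [hx n, hy n]; rfl)
    ⟨WithLp.toLp 2 (p, q), WithLp.ofLp_injective 2 (Prod.ext hp hq), sub_eq_zero.2 hpq⟩
  exact ⟨s.fst, s.snd, congrArg WithLp.fst hTs, congrArg WithLp.snd hTs, sub_eq_zero.1 hAs,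
    hs.fst, hs.snd⟩

/-- Corollary (Chang et al.): weak convergence of the relaxed split equality fixed
point algorithm with variable parameters `η n`, `ζ n`. -/
theorem sefpp_weak_convergence_chang
    {H₁ H₂ H₃ : Type*}
    [NormedAddCommGroup H₁] [InnerProductSpace ℝ H₁] [CompleteSpace H₁]
    [NormedAddCommGroup H₂] [InnerProductSpace ℝ H₂] [CompleteSpace H₂]
    [NormedAddCommGroup H₃] [InnerProductSpace ℝ H₃] [CompleteSpace H₃]
    (D₁ : H₁ →L[ℝ] H₃) (D₂ : H₂ →L[ℝ] H₃)
    (hD₁ : D₁ ≠ 0) (hD₂ : D₂ ≠ 0)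
    (L₁ L₂ : ℝ) (hL₁ : L₁ = ‖D₁‖ ^ 2) (hL₂ : L₂ = ‖D₂‖ ^ 2)
    (L : ℝ) (hL : 1 ≤ L)
    (T₁ : H₁ → H₁) (T₂ : H₂ → H₂)
    (hT₁lip : ∀ x y : H₁, ‖T₁ x - T₁ y‖ ≤ L * ‖x - y‖)
    (hT₂lip : ∀ x y : H₂, ‖T₂ x - T₂ y‖ ≤ L * ‖x - y‖)
    (hT₁qpc : ∀ (x p : H₁), T₁ p = p → ‖T₁ x - p‖ ^ 2 ≤ ‖x - p‖ ^ 2 + ‖x - T₁ x‖ ^ 2)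
    (hT₂qpc : ∀ (y q : H₂), T₂ q = q → ‖T₂ y - q‖ ^ 2 ≤ ‖y - q‖ ^ 2 + ‖y - T₂ y‖ ^ 2)
    (hFix₁ : ∃ p, T₁ p = p) (hFix₂ : ∃ q, T₂ q = q)
    (hT₁dem : ∀ (u : ℕ → H₁) (z : H₁),
      (∀ h : H₁, Filter.Tendsto (fun n => ⟪u n, h⟫) Filter.atTop (nhds ⟪z, h⟫)) →
      Filter.Tendsto (fun n => ‖u n - T₁ (u n)‖) Filter.atTop (nhds 0) → T₁ z = z)
    (hT₂dem : ∀ (u : ℕ → H₂) (z : H₂),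
      (∀ h : H₂, Filter.Tendsto (fun n => ⟪u n, h⟫) Filter.atTop (nhds ⟪z, h⟫)) →
      Filter.Tendsto (fun n => ‖u n - T₂ (u n)‖) Filter.atTop (nhds 0) → T₂ z = z)
    (ηlo ζhi : ℝ) (hηlo : 0 < ηlo) (hζhi : ζhi < 1 / (1 + Real.sqrt (1 + L ^ 2)))
    (η ζ : ℕ → ℝ)
    (hηζ : ∀ n, ηlo ≤ η n ∧ η n < ζ n ∧ ζ n ≤ ζhi)
    (a b c d : ℝ) (ha : 0 < a) (hb : b < 1) (hc : 0 < c) (hd : d < 2 / (L₁ + L₂))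
    (α τ : ℕ → ℝ)
    (hα : ∀ n, a ≤ α n ∧ α n ≤ b)
    (hτ : ∀ n, c ≤ τ n ∧ τ n ≤ d)
    (x : ℕ → H₁) (y : ℕ → H₂) (v : ℕ → H₁) (w : ℕ → H₂)
    (hv : ∀ n, v n = x n + τ n • (ContinuousLinearMap.adjoint D₁) (D₂ (y n) - D₁ (x n)))
    (hx : ∀ n, x (n + 1) = α n • x n + (1 - α n) •
      ((1 - η n) • v n + η n • T₁ ((1 - ζ n) • v n + ζ n • T₁ (v n))))
    (hw : ∀ n, w n = y n + τ n • (ContinuousLinearMap.adjoint D₂) (D₁ (x n) - D₂ (y n)))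
    (hy : ∀ n, y (n + 1) = α n • y n + (1 - α n) •
      ((1 - η n) • w n + η n • T₂ ((1 - ζ n) • w n + ζ n • T₂ (w n))))
    (hΓ : ∃ (p : H₁) (q : H₂), T₁ p = p ∧ T₂ q = q ∧ D₁ p = D₂ q) :
    ∃ (xs : H₁) (ys : H₂), T₁ xs = xs ∧ T₂ ys = ys ∧ D₁ xs = D₂ ys ∧
      (∀ z : H₁, Filter.Tendsto (fun n => ⟪x n, z⟫) Filter.atTop (nhds ⟪xs, z⟫)) ∧
      (∀ z : H₂, Filter.Tendsto (fun n => ⟪y n, z⟫) Filter.atTop (nhds ⟪ys, z⟫)) :=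
  sefpp_weak_convergence_chang_general D₁ D₂ L₁ L₂ hL₁ hL₂ L hL T₁ T₂ hT₁lip hT₂lip hT₁qpc hT₂qpc
    hT₁dem hT₂dem ηlo ζhi hηlo hζhi η ζ hηζ a b c d ha hb hc hd α τ hα hτ x y v w hv hx hw hy hΓ
end

section
/- Let H be a real Hilbert space, L ≥ 1, and T : H → H an L-Lipschitz mapping. If 0 < η < ζ < 1/(1+√(1+L²)) and U := (1−η)I + ηT((1−ζ)I + ζT), then the fixed point sets coincide: {p : Tp = p} = {p : T((1−ζ)p + ζTp) = p} = {p : Up = p}. -/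
/-- Lemma 2.2(a): the fixed point sets of `T`, of `T ∘ ((1-ζ)I + ζT)`, and of
`U = (1-η)I + ηT((1-ζ)I + ζT)` coincide. -/
theorem fixedPointSets_coincide
    {H : Type*} [NormedAddCommGroup H] [InnerProductSpace ℝ H] [CompleteSpace H]
    (L : ℝ) (hL : 1 ≤ L) (T : H → H)
    (hTlip : ∀ x y : H, ‖T x - T y‖ ≤ L * ‖x - y‖)
    (η ζ : ℝ) (hη : 0 < η) (hηζ : η < ζ)
    (hζ : ζ < 1 / (1 + Real.sqrt (1 + L ^ 2)))
    (U : H → H) (hU : ∀ x : H, U x = (1 - η) • x + η • T ((1 - ζ) • x + ζ • T x)) :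
    {p : H | T p = p} = {p : H | T ((1 - ζ) • p + ζ • T p) = p} ∧
    {p : H | T p = p} = {p : H | U p = p} := by
  have hζ0 : 0 < ζ := hη.trans hηζ
  have hL0 : 0 < L := lt_of_lt_of_le one_pos hL
  have hsq : L ≤ Real.sqrt (1 + L ^ 2) := by
    nlinarith [Real.sq_sqrt (by positivity : (0:ℝ) ≤ 1 + L ^ 2),
      Real.sqrt_nonneg (1 + L ^ 2)]
  have hLζ : L * ζ < 1 := by
    have h1 : ζ < 1 / (1 + L) := by
      have : (1:ℝ) / (1 + Real.sqrt (1 + L ^ 2)) ≤ 1 / (1 + L) := by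
        apply one_div_le_one_div_of_le (by linarith) (by linarith)
      linarith
    have h2 : ζ * (1 + L) < 1 := by
      have := (lt_div_iff₀ (by linarith : (0:ℝ) < 1 + L)).mp h1
      linarith
    nlinarith
  -- key: fixed point of S implies fixed point of T
  have key : ∀ p : H, T ((1 - ζ) • p + ζ • T p) = p → T p = p := by
    intro p hp
    have hy : p - ((1 - ζ) • p + ζ • T p) = ζ • (p - T p) := by
      rw [smul_sub, sub_smul, one_smul]; abel
    have h1 : ‖T p - p‖ ≤ L * ζ * ‖T p - p‖ := by
      calc ‖T p - p‖ = ‖T p - T ((1 - ζ) • p + ζ • T p)‖ := by rw [hp]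
        _ ≤ L * ‖p - ((1 - ζ) • p + ζ • T p)‖ := hTlip _ _
        _ = L * (ζ * ‖p - T p‖) := by
            rw [hy, norm_smul, Real.norm_eq_abs, abs_of_pos hζ0]
        _ = L * ζ * ‖T p - p‖ := by rw [norm_sub_rev]; ring
    have : ‖T p - p‖ = 0 := by nlinarith [norm_nonneg (T p - p)]
    exact sub_eq_zero.mp (norm_eq_zero.mp this)
  have hfix : ∀ p : H, T p = p → (1 - ζ) • p + ζ • T p = p := by
    intro p hp
    rw [hp, sub_smul, one_smul]; abel
  constructor
  · ext p
    simp only [Set.mem_setOf_eq]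
    constructor
    · intro hp; rw [hfix p hp, hp]
    · exact key p
  · ext p
    simp only [Set.mem_setOf_eq, hU]
    constructor
    · intro hp
      rw [hfix p hp, hp, sub_smul, one_smul]; abel
    · intro hp
      apply key p
      have h2 : η • (T ((1 - ζ) • p + ζ • T p) - p) = 0 := by
        rw [smul_sub]
        have : (1 - η) • p + η • T ((1 - ζ) • p + ζ • T p) - p
            = η • T ((1 - ζ) • p + ζ • T p) - η • p := by
          rw [sub_smul, one_smul]; abel
        rw [← this, hp, sub_self]
      have := smul_eq_zero.mp h2
      rcases this with h | h
      · exact absurd h (ne_of_gt hη)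
      · exact sub_eq_zero.mp h
end

section
/- Let H be a real Hilbert space, L ≥ 1, and T : H → H an L-Lipschitz mapping with 0 < η < ζ < 1/(1+√(1+L²)), and set U := (1−η)I + ηT((1−ζ)I + ζT). If T − I is demiclosed at zero, then U − I is demiclosed at zero; that is, whenever (x_n) converges weakly to x and x_n − U x_n → 0 in norm, then Ux = x. -/
open scoped RealInnerProductSpace

/-- Lemma 2.2(b): if `T - I` is demiclosed at zero, then so is `U - I`, where
`U = (1-η)I + ηT((1-ζ)I + ζT)`. -/
theorem demiclosed_transfer
    {H : Type*} [NormedAddCommGroup H] [InnerProductSpace ℝ H] [CompleteSpace H]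
    (L : ℝ) (hL : 1 ≤ L) (T : H → H)
    (hTlip : ∀ x y : H, ‖T x - T y‖ ≤ L * ‖x - y‖)
    (η ζ : ℝ) (hη : 0 < η) (hηζ : η < ζ)
    (hζ : ζ < 1 / (1 + Real.sqrt (1 + L ^ 2)))
    (U : H → H) (hU : ∀ x : H, U x = (1 - η) • x + η • T ((1 - ζ) • x + ζ • T x))
    (hTdem : ∀ (u : ℕ → H) (z : H),
      (∀ h : H, Filter.Tendsto (fun n => ⟪u n, h⟫) Filter.atTop (nhds ⟪z, h⟫)) →
      Filter.Tendsto (fun n => ‖u n - T (u n)‖) Filter.atTop (nhds 0) → T z = z) :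
    ∀ (u : ℕ → H) (z : H),
      (∀ h : H, Filter.Tendsto (fun n => ⟪u n, h⟫) Filter.atTop (nhds ⟪z, h⟫)) →
      Filter.Tendsto (fun n => ‖u n - U (u n)‖) Filter.atTop (nhds 0) → U z = z := by
  intro u z hw hnorm
  have hζ0 : 0 < ζ := hη.trans hηζ
  have hL0 : 0 < L := lt_of_lt_of_le one_pos hL
  have hsqnn : (0:ℝ) ≤ Real.sqrt (1 + L ^ 2) := Real.sqrt_nonneg _
  have hsq : L ≤ Real.sqrt (1 + L ^ 2) := by
    nth_rewrite 1 [show L = Real.sqrt (L ^ 2) by rw [Real.sqrt_sq hL0.le]]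
    exact Real.sqrt_le_sqrt (by linarith)
  have h1pos : (0:ℝ) < 1 + Real.sqrt (1 + L ^ 2) := by linarith
  have hLζ : L * ζ < 1 := by
    have h2 : ζ * (1 + Real.sqrt (1 + L ^ 2)) < 1 := (lt_div_iff₀ h1pos).mp hζ
    nlinarith
  have hd : 0 < 1 - L * ζ := by linarith
  have hpos : 0 < η * (1 - L * ζ) := mul_pos hη hd
  have key : ∀ n, ‖u n - T (u n)‖ ≤ (1 / (η * (1 - L * ζ))) * ‖u n - U (u n)‖ := by
    intro n
    set x := u n with hx
    set v := (1 - ζ) • x + ζ • T x with hv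
    have h1 : x - U x = η • (x - T v) := by rw [hU]; module
    have h2 : ‖x - U x‖ = η * ‖x - T v‖ := by
      rw [h1, norm_smul, Real.norm_of_nonneg hη.le]
    have h3 : ‖v - x‖ = ζ * ‖x - T x‖ := by
      have hvx : v - x = ζ • (T x - x) := by rw [hv]; module
      rw [hvx, norm_smul, Real.norm_of_nonneg hζ0.le, norm_sub_rev]
    have h4 : ‖x - T x‖ ≤ ‖x - T v‖ + L * (ζ * ‖x - T x‖) := by
      calc ‖x - T x‖ = ‖(x - T v) + (T v - T x)‖ := by rw [sub_add_sub_cancel]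
        _ ≤ ‖x - T v‖ + ‖T v - T x‖ := norm_add_le _ _
        _ ≤ ‖x - T v‖ + L * ‖v - x‖ := by
            have := hTlip v x
            linarith
        _ = ‖x - T v‖ + L * (ζ * ‖x - T x‖) := by rw [h3]
    have hfin : η * (1 - L * ζ) * ‖x - T x‖ ≤ ‖x - U x‖ := by
      rw [h2]; nlinarith
    rw [one_div_mul_eq_div, le_div_iff₀ hpos]
    nlinarith
  have hTz : Filter.Tendsto (fun n => ‖u n - T (u n)‖) Filter.atTop (nhds 0) := by
    apply squeeze_zero (fun n => norm_nonneg _) key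
    have := hnorm.const_mul (1 / (η * (1 - L * ζ)))
    simpa using this
  have hz : T z = z := hTdem u z hw hTz
  have hvz : (1 - ζ) • z + ζ • T z = z := by rw [hz]; module
  rw [hU, hvz, hz]; module
end

section
/- Let H be a real Hilbert space, L ≥ 1, and T : H → H an L-Lipschitz quasi-pseudocontractive mapping with nonempty fixed point set. If 0 < η < ζ < 1/(1+√(1+L²)) and U := (1−η)I + ηT((1−ζ)I + ζT), then U is quasi-nonexpansive: ‖Ux − p‖ ≤ ‖x − p‖ for all x ∈ H and all p with Tp = p. -/
lemma combo_sq' {H : Type*} [NormedAddCommGroup H] [InnerProductSpace ℝ H]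
    (t : ℝ) (a b : H) :
    ‖(1-t) • a + t • b‖ ^ 2 = (1-t) * ‖a‖ ^ 2 + t * ‖b‖ ^ 2 - t * (1-t) * ‖a - b‖ ^ 2 := by
  rw [← real_inner_self_eq_norm_sq, ← real_inner_self_eq_norm_sq,
      ← real_inner_self_eq_norm_sq, ← real_inner_self_eq_norm_sq]
  simp only [inner_add_left, inner_add_right, inner_sub_left, inner_sub_right,
    real_inner_smul_left, real_inner_smul_right]
  rw [real_inner_comm b a]
  ring

/-- Lemma 2.2(d): if `T` is an `L`-Lipschitz quasi-pseudocontractive mapping with a fixed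
point and `0 < η < ζ < 1/(1+√(1+L²))`, then `U = (1-η)I + ηT((1-ζ)I + ζT)` is
quasi-nonexpansive. -/
theorem U_quasiNonexpansive
    {H : Type*} [NormedAddCommGroup H] [InnerProductSpace ℝ H] [CompleteSpace H]
    (L : ℝ) (hL : 1 ≤ L) (T : H → H)
    (hTlip : ∀ x y : H, ‖T x - T y‖ ≤ L * ‖x - y‖)
    (hTqpc : ∀ (x p : H), T p = p → ‖T x - p‖ ^ 2 ≤ ‖x - p‖ ^ 2 + ‖x - T x‖ ^ 2)
    (hFix : ∃ p, T p = p)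
    (η ζ : ℝ) (hη : 0 < η) (hηζ : η < ζ)
    (hζ : ζ < 1 / (1 + Real.sqrt (1 + L ^ 2)))
    (U : H → H) (hU : ∀ x : H, U x = (1 - η) • x + η • T ((1 - ζ) • x + ζ • T x)) :
    ∀ (x p : H), T p = p → ‖U x - p‖ ≤ ‖x - p‖ := by
  -- basic numeric facts about ζ, η
  have hs0 : (0:ℝ) ≤ 1 + L ^ 2 := by nlinarith
  set s := Real.sqrt (1 + L ^ 2) with hs
  have hs2 : s ^ 2 = 1 + L ^ 2 := Real.sq_sqrt hs0
  have hs1 : 1 < s := by nlinarith [Real.sqrt_nonneg (1 + L ^ 2)]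
  have hζpos : 0 < ζ := hη.trans hηζ
  have hζs : ζ * (1 + s) < 1 := by
    rw [lt_div_iff₀ (by linarith)] at hζ; linarith
  have hζ1 : ζ < 1 := by nlinarith
  have hη1 : η < 1 := lt_trans hηζ hζ1
  have hkey : L ^ 2 * ζ ^ 2 + 2 * ζ - 1 ≤ 0 := by
    nlinarith [mul_pos hζpos hζpos, mul_lt_mul_of_pos_left hζs hζpos,
      mul_nonneg (mul_nonneg hζpos.le hζpos.le) (by linarith : (0:ℝ) ≤ s - 1)]
  intro x p hp
  set y : H := (1 - ζ) • x + ζ • T x with hy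
  -- abbreviations
  set a := ‖x - p‖ ^ 2 with ha
  set b := ‖x - T x‖ ^ 2 with hb
  set c := ‖x - T y‖ ^ 2 with hc
  set d := ‖T x - T y‖ ^ 2 with hd
  set e := ‖y - p‖ ^ 2 with he
  set f := ‖y - T y‖ ^ 2 with hf
  set g := ‖T y - p‖ ^ 2 with hg
  set h := ‖T x - p‖ ^ 2 with hh
  have h1 : ‖U x - p‖ ^ 2 = (1 - η) * a + η * g - η * (1 - η) * c := by
    have e1 : U x - p = (1 - η) • (x - p) + η • (T y - p) := by
      rw [hU x, hy]; module
    have e2 : (x - p) - (T y - p) = x - T y := by abel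
    rw [e1, combo_sq', e2]
  have h2 : e = (1 - ζ) * a + ζ * h - ζ * (1 - ζ) * b := by
    have e1 : y - p = (1 - ζ) • (x - p) + ζ • (T x - p) := by rw [hy]; module
    have e2 : (x - p) - (T x - p) = x - T x := by abel
    rw [he, e1, combo_sq', e2, ← ha, ← hh, ← hb]
  have h3 : f = (1 - ζ) * c + ζ * d - ζ * (1 - ζ) * b := by
    have e1 : y - T y = (1 - ζ) • (x - T y) + ζ • (T x - T y) := by rw [hy]; module
    have e2 : (x - T y) - (T x - T y) = x - T x := by abel
    rw [hf, e1, combo_sq', e2, ← hc, ← hd, ← hb]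
  have h4 : d ≤ L ^ 2 * ζ ^ 2 * b := by
    have e1 : x - y = ζ • (x - T x) := by rw [hy]; module
    have hxy : ‖x - y‖ = ζ * ‖x - T x‖ := by
      rw [e1, norm_smul, Real.norm_eq_abs, abs_of_pos hζpos]
    have h0 : ‖T x - T y‖ ≤ L * (ζ * ‖x - T x‖) := by
      calc ‖T x - T y‖ ≤ L * ‖x - y‖ := hTlip x y
        _ = L * (ζ * ‖x - T x‖) := by rw [hxy]
    rw [hd, hb]
    calc ‖T x - T y‖ ^ 2 ≤ (L * (ζ * ‖x - T x‖)) ^ 2 := pow_le_pow_left₀ (norm_nonneg _) h0 2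
      _ = L ^ 2 * ζ ^ 2 * ‖x - T x‖ ^ 2 := by ring
  have h5 : h ≤ a + b := hTqpc x p hp
  have h6 : g ≤ e + f := by
    have hyp : T p = p := hp
    have := hTqpc y p hp
    rw [← hg, ← he, ← hf] at this; linarith
  have hbnn : 0 ≤ b := by rw [hb]; positivity
  have hcnn : 0 ≤ c := by rw [hc]; positivity
  -- multiplied facts for linarith
  have he2 : η * e = η * ((1 - ζ) * a + ζ * h - ζ * (1 - ζ) * b) := by rw [h2]
  have he3 : η * f = η * ((1 - ζ) * c + ζ * d - ζ * (1 - ζ) * b) := by rw [h3]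
  have t1 : 0 ≤ η * (e + f - g) := mul_nonneg hη.le (by linarith)
  have t2 : 0 ≤ η * ζ * (a + b - h) := mul_nonneg (mul_nonneg hη.le hζpos.le) (by linarith)
  have t3 : 0 ≤ η * ζ * (L ^ 2 * ζ ^ 2 * b - d) := mul_nonneg (mul_nonneg hη.le hζpos.le) (by linarith)
  have t4 : 0 ≤ η * (ζ - η) * c := mul_nonneg (mul_nonneg hη.le (by linarith)) hcnn
  have t5 : 0 ≤ η * ζ * ((1 - 2 * ζ - L ^ 2 * ζ ^ 2) * b) :=
    mul_nonneg (mul_nonneg hη.le hζpos.le) (mul_nonneg (by linarith) hbnn)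
  have hsq : ‖U x - p‖ ^ 2 ≤ a := by linarith [h1, he2, he3, t1, t2, t3, t4, t5]
  rw [ha] at hsq
  exact (pow_le_pow_iff_left₀ (norm_nonneg _) (norm_nonneg _) two_ne_zero).mp hsq
end

section
/- Let H be a real Hilbert space, L > 0, and T : H → H an L-Lipschitz mapping. Let η, ζ > 0 with ζL < 1 and set U := (1−η)I + ηT((1−ζ)I + ζT). Then for every x ∈ H, ‖x − Tx‖ ≤ (1/((1−ζL)η)) ‖x − Ux‖. -/
/-- Residual bound: for an `L`-Lipschitz `T`, `η, ζ > 0` with `ζL < 1` and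
`U = (1-η)I + ηT((1-ζ)I + ζT)`, one has `‖x - Tx‖ ≤ ‖x - Ux‖ / ((1 - ζL)η)`. -/
theorem residual_bound
    {H : Type*} [NormedAddCommGroup H] [InnerProductSpace ℝ H] [CompleteSpace H]
    (L : ℝ) (hL : 0 < L) (T : H → H)
    (hTlip : ∀ x y : H, ‖T x - T y‖ ≤ L * ‖x - y‖)
    (η ζ : ℝ) (hη : 0 < η) (hζ : 0 < ζ) (hζL : ζ * L < 1)
    (U : H → H) (hU : ∀ x : H, U x = (1 - η) • x + η • T ((1 - ζ) • x + ζ • T x)) :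
    ∀ x : H, ‖x - T x‖ ≤ (1 / ((1 - ζ * L) * η)) * ‖x - U x‖ := by
  intro x
  set y := (1 - ζ) • x + ζ • T x with hy
  have hxU : x - U x = η • (x - T y) := by
    rw [hU x]
    module
  have hnormU : ‖x - U x‖ = η * ‖x - T y‖ := by
    rw [hxU, norm_smul, Real.norm_eq_abs, abs_of_pos hη]
  have hyx : y - x = ζ • (T x - x) := by rw [hy]; module
  have h1 : ‖T y - T x‖ ≤ L * (ζ * ‖x - T x‖) := by
    calc ‖T y - T x‖ ≤ L * ‖y - x‖ := hTlip y x
      _ = L * (ζ * ‖x - T x‖) := by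
          rw [hyx, norm_smul, Real.norm_eq_abs, abs_of_pos hζ, ← norm_neg, neg_sub]
  have h2 : ‖x - T x‖ ≤ ‖x - T y‖ + ‖T y - T x‖ := by
    have := norm_add_le (x - T y) (T y - T x)
    simpa using this
  have key : (1 - ζ * L) * ‖x - T x‖ ≤ ‖x - T y‖ := by nlinarith [norm_nonneg (x - T x)]
  have hpos : 0 < (1 - ζ * L) * η := mul_pos (by linarith) hη
  rw [hnormU, one_div, inv_mul_eq_div, le_div_iff₀ hpos]
  nlinarith [norm_nonneg (x - T y)]
end

section
/- Let H₁, H₂, H₃ be real Hilbert spaces, D₁ : H₁ → H₃ and D₂ : H₂ → H₃ bounded linear operators with adjoints D₁*, D₂*, and L₁ := ‖D₁‖², L₂ := ‖D₂‖². Let U : H₁ → H₁ and V : H₂ → H₂ be quasi-nonexpansive, p a fixed point of U and q a fixed point of V with D₁p = D₂q, and τ ∈ [0,1]. For x ∈ H₁ and y ∈ H₂ define v := (1−τ)x + τUx + τD₁*(D₂y − D₁x) and w := (1−τ)y + τVy + τD₂*(D₁x − D₂y). Then ‖v − p‖² + ‖w − q‖² ≤ ‖x − p‖² + ‖y − q‖²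 − τ(2 − τ(L₁+L₂))‖D₁x − D₂y‖² − τ(1−τ)(‖Ux − x‖² + ‖Vy − y‖²) + 2τ²(⟨Ux − x, D₁*(D₂y − D₁x)⟩ + ⟨Vy − y, D₂*(D₁x − D₂y)⟩). -/
open scoped RealInnerProductSpace

private lemma expand_aux {H : Type*} [NormedAddCommGroup H] [InnerProductSpace ℝ H]
    (u a d : H) (τ : ℝ) :
    ‖u + τ • a + τ • d‖^2 = (1-τ)*‖u‖^2 + τ*‖u+a‖^2 - τ*(1-τ)*‖a‖^2 + τ^2*‖d‖^2
      + 2*τ*⟪u,d⟫ + 2*τ^2*⟪a,d⟫ := by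
  simp only [← real_inner_self_eq_norm_sq]
  simp only [inner_add_add_self, inner_add_left, inner_add_right, real_inner_smul_left,
    real_inner_smul_right]
  ring_nf
  rw [real_inner_comm a u, real_inner_comm d u, real_inner_comm d a]
  ring

/-- One-step estimate for the algorithm with prior knowledge of operator norms. -/
theorem one_step_estimate
    {H₁ H₂ H₃ : Type*}
    [NormedAddCommGroup H₁] [InnerProductSpace ℝ H₁] [CompleteSpace H₁]
    [NormedAddCommGroup H₂] [InnerProductSpace ℝ H₂] [CompleteSpace H₂]
    [NormedAddCommGroup H₃] [InnerProductSpace ℝ H₃] [CompleteSpace H₃]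
    (D₁ : H₁ →L[ℝ] H₃) (D₂ : H₂ →L[ℝ] H₃)
    (L₁ L₂ : ℝ) (hL₁ : L₁ = ‖D₁‖ ^ 2) (hL₂ : L₂ = ‖D₂‖ ^ 2)
    (U : H₁ → H₁) (V : H₂ → H₂)
    (hUqne : ∀ (x p : H₁), U p = p → ‖U x - p‖ ≤ ‖x - p‖)
    (hVqne : ∀ (y q : H₂), V q = q → ‖V y - q‖ ≤ ‖y - q‖)
    (p : H₁) (q : H₂) (hp : U p = p) (hq : V q = q) (hpq : D₁ p = D₂ q)
    (τ : ℝ) (hτ : 0 ≤ τ ∧ τ ≤ 1)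
    (x : H₁) (y : H₂) (v : H₁) (w : H₂)
    (hv : v = (1 - τ) • x + τ • U x +
      τ • (ContinuousLinearMap.adjoint D₁) (D₂ y - D₁ x))
    (hw : w = (1 - τ) • y + τ • V y +
      τ • (ContinuousLinearMap.adjoint D₂) (D₁ x - D₂ y)) :
    ‖v - p‖ ^ 2 + ‖w - q‖ ^ 2 ≤ ‖x - p‖ ^ 2 + ‖y - q‖ ^ 2
      - τ * (2 - τ * (L₁ + L₂)) * ‖D₁ x - D₂ y‖ ^ 2
      - τ * (1 - τ) * (‖U x - x‖ ^ 2 + ‖V y - y‖ ^ 2)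
      + 2 * τ ^ 2 * (⟪U x - x, (ContinuousLinearMap.adjoint D₁) (D₂ y - D₁ x)⟫
        + ⟪V y - y, (ContinuousLinearMap.adjoint D₂) (D₁ x - D₂ y)⟫) := by
  obtain ⟨hτ0, hτ1⟩ := hτ
  set d₁ : H₁ := (ContinuousLinearMap.adjoint D₁) (D₂ y - D₁ x) with hd₁
  set d₂ : H₂ := (ContinuousLinearMap.adjoint D₂) (D₁ x - D₂ y) with hd₂
  have hvp : v - p = (x - p) + τ • (U x - x) + τ • d₁ := by rw [hv]; module
  have hwq : w - q = (y - q) + τ • (V y - y) + τ • d₂ := by rw [hw]; module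
  have e1 : ‖v - p‖^2 = (1-τ)*‖x-p‖^2 + τ*‖(x-p)+(U x - x)‖^2 - τ*(1-τ)*‖U x - x‖^2
      + τ^2*‖d₁‖^2 + 2*τ*⟪x-p, d₁⟫ + 2*τ^2*⟪U x - x, d₁⟫ := by
    rw [hvp, expand_aux]
  have e2 : ‖w - q‖^2 = (1-τ)*‖y-q‖^2 + τ*‖(y-q)+(V y - y)‖^2 - τ*(1-τ)*‖V y - y‖^2
      + τ^2*‖d₂‖^2 + 2*τ*⟪y-q, d₂⟫ + 2*τ^2*⟪V y - y, d₂⟫ := by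
    rw [hwq, expand_aux]
  have hxa : (x - p) + (U x - x) = U x - p := by abel
  have hyb : (y - q) + (V y - y) = V y - q := by abel
  rw [hxa] at e1; rw [hyb] at e2
  -- quasi-nonexpansiveness, squared
  have hU2 : ‖U x - p‖^2 ≤ ‖x - p‖^2 :=
    pow_le_pow_left₀ (norm_nonneg _) (hUqne x p hp) 2
  have hV2 : ‖V y - q‖^2 ≤ ‖y - q‖^2 :=
    pow_le_pow_left₀ (norm_nonneg _) (hVqne y q hq) 2
  -- adjoint norm bounds
  have hd1 : ‖d₁‖^2 ≤ L₁ * ‖D₁ x - D₂ y‖^2 := by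
    have h := (ContinuousLinearMap.adjoint D₁).le_opNorm (D₂ y - D₁ x)
    rw [ContinuousLinearMap.adjoint.norm_map D₁, norm_sub_rev] at h
    calc ‖d₁‖^2 ≤ (‖D₁‖ * ‖D₁ x - D₂ y‖)^2 :=
          pow_le_pow_left₀ (norm_nonneg _) h 2
      _ = L₁ * ‖D₁ x - D₂ y‖^2 := by rw [hL₁]; ring
  have hd2 : ‖d₂‖^2 ≤ L₂ * ‖D₁ x - D₂ y‖^2 := by
    have h := (ContinuousLinearMap.adjoint D₂).le_opNorm (D₁ x - D₂ y)
    rw [ContinuousLinearMap.adjoint.norm_map D₂] at h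
    calc ‖d₂‖^2 ≤ (‖D₂‖ * ‖D₁ x - D₂ y‖)^2 :=
          pow_le_pow_left₀ (norm_nonneg _) h 2
      _ = L₂ * ‖D₁ x - D₂ y‖^2 := by rw [hL₂]; ring
  -- cross terms
  have key : ⟪x - p, d₁⟫ + ⟪y - q, d₂⟫ = -‖D₁ x - D₂ y‖^2 := by
    rw [hd₁, hd₂, ContinuousLinearMap.adjoint_inner_right,
      ContinuousLinearMap.adjoint_inner_right, map_sub, map_sub, hpq,
      ← real_inner_self_eq_norm_sq]
    simp only [inner_sub_left, inner_sub_right]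
    ring
  have key2 : 2*τ*(⟪x - p, d₁⟫ + ⟪y - q, d₂⟫) = 2*τ*(-‖D₁ x - D₂ y‖^2) := by rw [key]
  rw [e1, e2]
  have t1 := mul_le_mul_of_nonneg_left hU2 hτ0
  have t2 := mul_le_mul_of_nonneg_left hV2 hτ0
  have t3 := mul_le_mul_of_nonneg_left hd1 (sq_nonneg τ)
  have t4 := mul_le_mul_of_nonneg_left hd2 (sq_nonneg τ)
  linarith [t1, t2, t3, t4, key2]
end

section
/- Let H₁, H₂, H₃ be real Hilbert spaces, D₁ : H₁ → H₃ and D₂ : H₂ → H₃ nonzero bounded linear operators with adjoints D₁*, D₂*. Let U : H₁ → H₁ and V : H₂ → H₂ be quasi-nonexpansive, and let p be a fixed point of U and q a fixed point of V with D₁p = D₂q. For x ∈ H₁ and y ∈ H₂ define k := (x − Ux) + D₁*(D₁x − D₂y) and r := (y − Vy) + D₂*(D₂y − D₁x). Then ⟨x − p, k⟩ + ⟨y − q, r⟩ ≥ (1/(4·max{1, ‖D₁‖², ‖D₂‖²}))(‖k‖² + ‖r‖²). -/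
open scoped RealInnerProductSpace

set_option maxHeartbeats 1000000 in
/-- Key coercivity estimate (inequality (3.24)): the resolvent-type residuals `k` and `r`
satisfy `⟨x-p, k⟩ + ⟨y-q, r⟩ ≥ (‖k‖² + ‖r‖²) / (4 max{1, ‖D₁‖², ‖D₂‖²})`. -/
theorem coercivity_estimate
    {H₁ H₂ H₃ : Type*}
    [NormedAddCommGroup H₁] [InnerProductSpace ℝ H₁] [CompleteSpace H₁]
    [NormedAddCommGroup H₂] [InnerProductSpace ℝ H₂] [CompleteSpace H₂]
    [NormedAddCommGroup H₃] [InnerProductSpace ℝ H₃] [CompleteSpace H₃]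
    (D₁ : H₁ →L[ℝ] H₃) (D₂ : H₂ →L[ℝ] H₃)
    (hD₁ : D₁ ≠ 0) (hD₂ : D₂ ≠ 0)
    (U : H₁ → H₁) (V : H₂ → H₂)
    (hUqne : ∀ (x p : H₁), U p = p → ‖U x - p‖ ≤ ‖x - p‖)
    (hVqne : ∀ (y q : H₂), V q = q → ‖V y - q‖ ≤ ‖y - q‖)
    (p : H₁) (q : H₂) (hp : U p = p) (hq : V q = q) (hpq : D₁ p = D₂ q)
    (x : H₁) (y : H₂) (k : H₁) (r : H₂)
    (hk : k = (x - U x) + (ContinuousLinearMap.adjoint D₁) (D₁ x - D₂ y))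
    (hr : r = (y - V y) + (ContinuousLinearMap.adjoint D₂) (D₂ y - D₁ x)) :
    ⟪x - p, k⟫ + ⟪y - q, r⟫ ≥
      (1 / (4 * max 1 (max (‖D₁‖ ^ 2) (‖D₂‖ ^ 2)))) * (‖k‖ ^ 2 + ‖r‖ ^ 2) := by
  set a := x - U x with ha
  set c := y - V y with hc
  set b := D₁ x - D₂ y with hb
  set M := max 1 (max (‖D₁‖ ^ 2) (‖D₂‖ ^ 2)) with hM
  have hM1 : (1:ℝ) ≤ M := le_max_left _ _
  have hM0 : (0:ℝ) < M := lt_of_lt_of_le one_pos hM1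
  have hD1M : ‖D₁‖ ^ 2 ≤ M := le_trans (le_max_left _ _) (le_max_right _ _)
  have hD2M : ‖D₂‖ ^ 2 ≤ M := le_trans (le_max_right _ _) (le_max_right _ _)
  -- quasi-nonexpansiveness gives demiclosedness-type inequalities
  have h1 : (1/2) * ‖a‖ ^ 2 ≤ ⟪x - p, a⟫ := by
    have hU := hUqne x p hp
    have hsq : ‖U x - p‖ ^ 2 ≤ ‖x - p‖ ^ 2 := by
      exact pow_le_pow_left₀ (norm_nonneg _) hU 2
    have he : U x - p = (x - p) - a := by rw [ha]; abel
    rw [he, norm_sub_sq_real] at hsq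
    linarith
  have h2 : (1/2) * ‖c‖ ^ 2 ≤ ⟪y - q, c⟫ := by
    have hV := hVqne y q hq
    have hsq : ‖V y - q‖ ^ 2 ≤ ‖y - q‖ ^ 2 := by
      exact pow_le_pow_left₀ (norm_nonneg _) hV 2
    have he : V y - q = (y - q) - c := by rw [hc]; abel
    rw [he, norm_sub_sq_real] at hsq
    linarith
  -- decompose the inner products
  have hk' : ⟪x - p, k⟫ = ⟪x - p, a⟫ + ⟪D₁ x - D₁ p, b⟫ := by
    rw [hk, inner_add_right, ContinuousLinearMap.adjoint_inner_right, map_sub]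
  have hr' : ⟪y - q, r⟫ = ⟪y - q, c⟫ + ⟪D₂ y - D₂ q, -b⟫ := by
    rw [hr, inner_add_right, ContinuousLinearMap.adjoint_inner_right, map_sub,
      show D₂ y - D₁ x = -b from by rw [hb, neg_sub]]
  have key : ⟪D₁ x - D₁ p, b⟫ + ⟪D₂ y - D₂ q, -b⟫ = ‖b‖ ^ 2 := by
    rw [inner_neg_right, ← sub_eq_add_neg, ← inner_sub_left]
    have he : (D₁ x - D₁ p) - (D₂ y - D₂ q) = b := by
      rw [hpq, hb]; abel
    rw [he, real_inner_self_eq_norm_sq]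
  -- norm bounds for k and r
  have hnad1 : ‖(ContinuousLinearMap.adjoint D₁) b‖ ≤ ‖D₁‖ * ‖b‖ := by
    calc ‖(ContinuousLinearMap.adjoint D₁) b‖ ≤ ‖ContinuousLinearMap.adjoint D₁‖ * ‖b‖ :=
          (ContinuousLinearMap.adjoint D₁).le_opNorm b
      _ = ‖D₁‖ * ‖b‖ := by rw [LinearIsometryEquiv.norm_map ContinuousLinearMap.adjoint D₁]
  have hnad2 : ‖(ContinuousLinearMap.adjoint D₂) (-b)‖ ≤ ‖D₂‖ * ‖b‖ := by
    calc ‖(ContinuousLinearMap.adjoint D₂) (-b)‖ ≤ ‖ContinuousLinearMap.adjoint D₂‖ * ‖-b‖ :=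
          (ContinuousLinearMap.adjoint D₂).le_opNorm (-b)
      _ = ‖D₂‖ * ‖b‖ := by rw [LinearIsometryEquiv.norm_map ContinuousLinearMap.adjoint D₂, norm_neg]
  have hkb : ‖k‖ ^ 2 ≤ 2 * ‖a‖ ^ 2 + 2 * (‖D₁‖ ^ 2) * ‖b‖ ^ 2 := by
    have hkn : ‖k‖ ≤ ‖a‖ + ‖D₁‖ * ‖b‖ := by
      rw [hk]
      exact le_trans (norm_add_le _ _) (by linarith [hnad1])
    have h := pow_le_pow_left₀ (norm_nonneg k) hkn 2
    have h2 : (‖a‖ + ‖D₁‖ * ‖b‖) ^ 2 ≤ 2 * ‖a‖ ^ 2 + 2 * (‖D₁‖ ^ 2) * ‖b‖ ^ 2 := by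
      nlinarith [sq_nonneg (‖a‖ - ‖D₁‖ * ‖b‖)]
    linarith
  have hrb : ‖r‖ ^ 2 ≤ 2 * ‖c‖ ^ 2 + 2 * (‖D₂‖ ^ 2) * ‖b‖ ^ 2 := by
    have hrn : ‖r‖ ≤ ‖c‖ + ‖D₂‖ * ‖b‖ := by
      have he : r = c + (ContinuousLinearMap.adjoint D₂) (-b) := by
        rw [hr, show D₂ y - D₁ x = -b from by rw [hb, neg_sub]]
      rw [he]
      exact le_trans (norm_add_le _ _) (by linarith [hnad2])
    have h := pow_le_pow_left₀ (norm_nonneg r) hrn 2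
    have h2 : (‖c‖ + ‖D₂‖ * ‖b‖) ^ 2 ≤ 2 * ‖c‖ ^ 2 + 2 * (‖D₂‖ ^ 2) * ‖b‖ ^ 2 := by
      nlinarith [sq_nonneg (‖c‖ - ‖D₂‖ * ‖b‖)]
    linarith
  have hfin : ‖k‖ ^ 2 + ‖r‖ ^ 2 ≤ 4 * M * (⟪x - p, k⟫ + ⟪y - q, r⟫) := by
    have hL : ⟪x - p, k⟫ + ⟪y - q, r⟫ = ⟪x - p, a⟫ + ⟪y - q, c⟫ + ‖b‖ ^ 2 := by
      rw [hk', hr']; linarith [key]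
    rw [hL]
    have t1 : 1 * ‖a‖ ^ 2 ≤ M * ‖a‖ ^ 2 := mul_le_mul_of_nonneg_right hM1 (sq_nonneg _)
    have t2 : 1 * ‖c‖ ^ 2 ≤ M * ‖c‖ ^ 2 := mul_le_mul_of_nonneg_right hM1 (sq_nonneg _)
    have t3 : ‖D₁‖ ^ 2 * ‖b‖ ^ 2 ≤ M * ‖b‖ ^ 2 := mul_le_mul_of_nonneg_right hD1M (sq_nonneg _)
    have t4 : ‖D₂‖ ^ 2 * ‖b‖ ^ 2 ≤ M * ‖b‖ ^ 2 := mul_le_mul_of_nonneg_right hD2M (sq_nonneg _)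
    have s1 : (1/2) * ‖a‖ ^ 2 + (1/2) * ‖c‖ ^ 2 + ‖b‖ ^ 2 ≤ ⟪x - p, a⟫ + ⟪y - q, c⟫ + ‖b‖ ^ 2 := by
      linarith
    have t5 := mul_le_mul_of_nonneg_left s1 (by positivity : (0:ℝ) ≤ 4 * M)
    nlinarith [hkb, hrb]
  rw [ge_iff_le, one_div, inv_mul_le_iff₀ (by positivity : (0:ℝ) < 4 * M)]
  linarith [hfin]
end
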